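/- arXiv:2412.15788 — 11 statements merged into one kernel-verified Lean document; each statement's English description precedes it below -/
import Mathlib

section
/- Let D be a minimal strong digraph (MSD) that contains a directed cycle C_2 of length 2. Then each of the two vertices of C_2 is either a linear vertex of D or a cut point of D. -/
/-- A digraph (given by its arc relation `A`) is strongly connected if every vertex
can reach every vertex by a directed path. -/
def StronglyConnected {V : Type*} (A : V → V → Prop) : Prop :=
  ∀ u v : V, Relation.ReflTransGen A u v

/-- A minimal strong digraph: strongly connected, and deleting any arc destroys
strong connectivity. -/
def IsMSD {V : Type*} (A : V → V → Prop) : Prop :=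
  StronglyConnected A ∧
    ∀ a b : V, A a b →
      ¬ StronglyConnected (fun x y => A x y ∧ ¬(x = a ∧ y = b))

/-- `c : ZMod q → V` describes a directed cycle of length `q` contained in the digraph `A`. -/
def IsCycleIn {V : Type*} (A : V → V → Prop) (q : ℕ) (c : ZMod q → V) : Prop :=
  2 ≤ q ∧ Function.Injective c ∧ ∀ i : ZMod q, A (c i) (c (i + 1))

/-- The digraph `D'` obtained from `A` by deleting all arcs of the cycle `c`. -/
def DelCycle {V : Type*} (A : V → V → Prop) (q : ℕ) (c : ZMod q → V) : V → V → Prop :=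
  fun x y => A x y ∧ ¬ ∃ i : ZMod q, x = c i ∧ y = c (i + 1)

/-- Mutual reachability of two vertices. -/
def MutReach {V : Type*} (A : V → V → Prop) (u v : V) : Prop :=
  Relation.ReflTransGen A u v ∧ Relation.ReflTransGen A v u

/-- `S` is (the vertex set of) a strong component of the digraph `A`. -/
def IsSC {V : Type*} (A : V → V → Prop) (S : Set V) : Prop :=
  ∃ v : V, S = {u | MutReach A v u}

/-- Indegree of `v`. -/
noncomputable def indeg {V : Type*} (A : V → V → Prop) (v : V) : ℕ := {u | A u v}.ncard

/-- Outdegree of `v`. -/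
noncomputable def outdeg {V : Type*} (A : V → V → Prop) (v : V) : ℕ := {u | A v u}.ncard

/-- A vertex is linear if its indegree and outdegree both equal 1. -/
def IsLinear {V : Type*} (A : V → V → Prop) (v : V) : Prop :=
  indeg A v = 1 ∧ outdeg A v = 1

/-- A vertex `v` is a cut point if deleting `v` (and its incident arcs) leaves a
digraph whose underlying graph is disconnected. -/
def IsCutPoint {V : Type*} (A : V → V → Prop) (v : V) : Prop :=
  ∃ x y : V, x ≠ v ∧ y ≠ v ∧
    ¬ Relation.ReflTransGen (fun a b => a ≠ v ∧ b ≠ v ∧ (A a b ∨ A b a)) x y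

/-- Adjacency in the condensation (Hasse diagram) of the digraph `A`:
two distinct strong components with an arc from the first to the second. -/
def HAdj {V : Type*} (A : V → V → Prop) (S T : Set V) : Prop :=
  IsSC A S ∧ IsSC A T ∧ S ≠ T ∧ ∃ u ∈ S, ∃ v ∈ T, A u v

noncomputable def HIndeg {V : Type*} (A : V → V → Prop) (S : Set V) : ℕ := {T : Set V | HAdj A T S}.ncard
noncomputable def HOutdeg {V : Type*} (A : V → V → Prop) (S : Set V) : ℕ := {T : Set V | HAdj A S T}.ncard

/-- A vertex of the Hasse diagram is linear if its indegree and outdegree there equal 1. -/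
def HLinear {V : Type*} (A : V → V → Prop) (S : Set V) : Prop :=
  HIndeg A S = 1 ∧ HOutdeg A S = 1

/-- Four elements of `ZMod q` appear in this cyclic order (all distinct). -/
def CyclicOrder4 {q : ℕ} (a b c d : ZMod q) : Prop :=
  0 < (b - a).val ∧ (b - a).val < (c - a).val ∧ (c - a).val < (d - a).val

section Aux

variable {V : Type*} {A : V → V → Prop}

/-- Any walk `u ⇒ v` that cannot be done avoiding the arc `(a,b)` yields
walks `u ⇒ a` and `b ⇒ v` avoiding that arc. -/
lemma reach_decomp (a b : V) {u v : V}
    (h : Relation.ReflTransGen A u v)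
    (h' : ¬ Relation.ReflTransGen (fun p q => A p q ∧ ¬(p = a ∧ q = b)) u v) :
    Relation.ReflTransGen (fun p q => A p q ∧ ¬(p = a ∧ q = b)) u a ∧
    Relation.ReflTransGen (fun p q => A p q ∧ ¬(p = a ∧ q = b)) b v := by
  induction h using Relation.ReflTransGen.head_induction_on with
  | refl => exact absurd Relation.ReflTransGen.refl h'
  | head hstep htail ih =>
    rename_i p c
    by_cases hc : Relation.ReflTransGen (fun p q => A p q ∧ ¬(p = a ∧ q = b)) c v
    · by_cases he : p = a ∧ c = b
      · exact ⟨he.1 ▸ Relation.ReflTransGen.refl, he.2 ▸ hc⟩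
      · exact absurd ((Relation.ReflTransGen.single ⟨hstep, he⟩).trans hc) h'
    · obtain ⟨ih1, ih2⟩ := ih hc
      by_cases he : p = a ∧ c = b
      · exact ⟨he.1 ▸ Relation.ReflTransGen.refl, ih2⟩
      · exact ⟨(Relation.ReflTransGen.single ⟨hstep, he⟩).trans ih1, ih2⟩

/-- Key lemma: in an MSD, there is no walk from `a` to `b` avoiding the arc `(a,b)`. -/
lemma key_lemma (hMSD : IsMSD A) {a b : V} (hab : A a b) :
    ¬ Relation.ReflTransGen (fun p q => A p q ∧ ¬(p = a ∧ q = b)) a b := by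
  intro hreach
  obtain ⟨hSC, hmin⟩ := hMSD
  have hh := hmin a b hab
  simp only [StronglyConnected, not_forall] at hh
  obtain ⟨u, v, huv⟩ := hh
  obtain ⟨hd1, hd2⟩ := reach_decomp a b (hSC u v) huv
  exact huv ((hd1.trans hreach).trans hd2)

lemma no_loop (hMSD : IsMSD A) (x : V) : ¬ A x x :=
  fun h => key_lemma hMSD h Relation.ReflTransGen.refl

lemma rx_ne_tgt (x : V) {u w : V}
    (h : Relation.ReflTransGen (fun p q => A p q ∧ p ≠ x ∧ q ≠ x) u w) (hu : u ≠ x) :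
    w ≠ x := by
  induction h with
  | refl => exact hu
  | tail h1 hstep ih => exact hstep.2.2

lemma rx_ne_src (x : V) {u w : V}
    (h : Relation.ReflTransGen (fun p q => A p q ∧ p ≠ x ∧ q ≠ x) u w) (hw : w ≠ x) :
    u ≠ x := by
  rcases h.cases_head with h | ⟨c, hc, _⟩
  · exact h ▸ hw
  · exact hc.2.1

/-- Every vertex reachable from `x` is reachable avoiding the arc `(x,y)`,
or reachable from `y` avoiding the vertex `x`. -/
lemma cover1 (x y : V) (hyx : y ≠ x) {w : V} (h : Relation.ReflTransGen A x w) :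
    Relation.ReflTransGen (fun p q => A p q ∧ ¬(p = x ∧ q = y)) x w ∨
    Relation.ReflTransGen (fun p q => A p q ∧ p ≠ x ∧ q ≠ x) y w := by
  induction h with
  | refl => exact Or.inl Relation.ReflTransGen.refl
  | tail hrec hbc ih =>
    rename_i b c
    rcases ih with hT | hR
    · by_cases he : b = x ∧ c = y
      · refine Or.inr ?_
        rw [he.2]
      · exact Or.inl (hT.tail ⟨hbc, he⟩)
    · by_cases hcx : c = x
      · refine Or.inl ?_
        rw [hcx]
      · exact Or.inr (hR.tail ⟨hbc, rx_ne_tgt x hR hyx, hcx⟩)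

/-- Every vertex that reaches `x` does so avoiding the arc `(y,x)`,
or reaches `y` avoiding the vertex `x`. -/
lemma cover2 (x y : V) (hyx : y ≠ x) {w : V} (h : Relation.ReflTransGen A w x) :
    Relation.ReflTransGen (fun p q => A p q ∧ ¬(p = y ∧ q = x)) w x ∨
    Relation.ReflTransGen (fun p q => A p q ∧ p ≠ x ∧ q ≠ x) w y := by
  induction h using Relation.ReflTransGen.head_induction_on with
  | refl => exact Or.inl Relation.ReflTransGen.refl
  | head hstep htail ih =>
    rename_i b c
    rcases ih with hT | hR
    · by_cases he : b = y ∧ c = x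
      · refine Or.inr ?_
        rw [← he.1]
      · exact Or.inl (Relation.ReflTransGen.head ⟨hstep, he⟩ hT)
    · by_cases hbx : b = x
      · refine Or.inl ?_
        rw [hbx]
      · exact Or.inr (Relation.ReflTransGen.head ⟨hstep, hbx, rx_ne_src x hR hyx⟩ hR)

/-- Core lemma: in an MSD with a 2-cycle `x ↔ y`, if `x` is not a cut point
then `y` is the unique out-neighbour of `x`. -/
lemma core (hMSD : IsMSD A) {x y : V} (hxy : x ≠ y) (h1 : A x y) (h2 : A y x)
    (hnc : ¬ IsCutPoint A x) : {u | A x u} = {y} := by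
  have hSC := hMSD.1
  have fact1 := key_lemma hMSD h1
  have fact2 := key_lemma hMSD h2
  have hyx : y ≠ x := hxy.symm
  ext z
  simp only [Set.mem_setOf_eq, Set.mem_singleton_iff]
  constructor
  · intro hz
    by_contra hne
    have hzx : z ≠ x := fun h => no_loop hMSD x (h ▸ hz)
    -- from ¬ cut point, get an undirected walk from z to y avoiding x
    rw [IsCutPoint] at hnc
    push_neg at hnc
    have hE : Relation.ReflTransGen
        (fun a b => a ≠ x ∧ b ≠ x ∧ (A a b ∨ A b a)) z y := hnc z y hzx hyx
    -- the set T = reach of x avoiding arc (x,y) is closed along undirected steps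
    have closure : ∀ p q : V, (p ≠ x ∧ q ≠ x ∧ (A p q ∨ A q p)) →
        Relation.ReflTransGen (fun p q => A p q ∧ ¬(p = x ∧ q = y)) x p →
        Relation.ReflTransGen (fun p q => A p q ∧ ¬(p = x ∧ q = y)) x q := by
      rintro p q ⟨hpx, hqx, harc | harc⟩ hTp
      · exact hTp.tail ⟨harc, fun h => hpx h.1⟩
      · by_contra hTq
        -- then y reaches q avoiding vertex x
        have hq : Relation.ReflTransGen (fun p q => A p q ∧ p ≠ x ∧ q ≠ x) y q := by
          rcases cover1 x y hyx (hSC x q) with h | h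
          · exact absurd h hTq
          · exact h
        have hp : Relation.ReflTransGen (fun p q => A p q ∧ p ≠ x ∧ q ≠ x) y p :=
          hq.tail ⟨harc, hqx, hpx⟩
        rcases cover2 x y hyx (hSC p x) with h | h
        · -- y ⇒ p avoiding x, then p ⇒ x avoiding arc (y,x) : contradicts fact2
          exact fact2 ((Relation.ReflTransGen.mono (fun a b hab => ⟨hab.1, fun he => hab.2.2 he.2⟩) _ _ hp).trans h)
        · -- x ⇒ p avoiding arc (x,y), then p ⇒ y avoiding x : contradicts fact1
          exact fact1 (hTp.trans (Relation.ReflTransGen.mono (fun a b hab => ⟨hab.1, fun he => hab.2.1 he.1⟩) _ _ h))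
    have hTz : Relation.ReflTransGen (fun p q => A p q ∧ ¬(p = x ∧ q = y)) x z :=
      Relation.ReflTransGen.single ⟨hz, fun h => hne h.2⟩
    have hTy : ∀ w, Relation.ReflTransGen
        (fun a b => a ≠ x ∧ b ≠ x ∧ (A a b ∨ A b a)) z w →
        Relation.ReflTransGen (fun p q => A p q ∧ ¬(p = x ∧ q = y)) x w := by
      intro w hw
      induction hw with
      | refl => exact hTz
      | tail hrec hstep ih => exact closure _ _ hstep ih
    exact fact1 (hTy y hE)
  · rintro rfl; exact h1

lemma msd_flip (h : IsMSD A) : IsMSD (fun a b => A b a) := by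
  constructor
  · intro u v
    exact Relation.reflTransGen_swap.mpr (h.1 v u)
  · intro a b hab hSC'
    apply h.2 b a hab
    intro u v
    refine (Relation.reflTransGen_swap (r := fun p q => A p q ∧ ¬(p = b ∧ q = a))).mp ?_
    exact Relation.ReflTransGen.mono (fun p q hpq => ⟨hpq.1, fun he => hpq.2 ⟨he.2, he.1⟩⟩) _ _ (hSC' v u)

lemma cut_flip {x : V} (h : IsCutPoint (fun a b => A b a) x) : IsCutPoint A x := by
  obtain ⟨p, q, hp, hq, hn⟩ := h
  exact ⟨p, q, hp, hq, fun hr =>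
    hn (Relation.ReflTransGen.mono (fun a b hab => ⟨hab.1, hab.2.1, hab.2.2.symm⟩) _ _ hr)⟩

end Aux

/-- In an MSD containing a 2-cycle on vertices `x, y`, each of `x` and `y`
is a linear vertex or a cut point. -/
theorem stmt0 {V : Type*} [Fintype V] (A : V → V → Prop) (x y : V)
    (hMSD : IsMSD A) (hxy : x ≠ y) (h1 : A x y) (h2 : A y x) :
    (IsLinear A x ∨ IsCutPoint A x) ∧ (IsLinear A y ∨ IsCutPoint A y) := by
  have flipMSD : IsMSD (fun a b => A b a) := msd_flip hMSD
  constructor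
  · by_cases hc : IsCutPoint A x
    · exact Or.inr hc
    · refine Or.inl ⟨?_, ?_⟩
      · have h : {u | A u x} = {y} :=
          core flipMSD hxy h2 h1 (fun hcut => hc (cut_flip hcut))
        show ({u | A u x}).ncard = 1
        rw [h, Set.ncard_singleton]
      · show ({u | A x u}).ncard = 1
        rw [core hMSD hxy h1 h2 hc, Set.ncard_singleton]
  · by_cases hc : IsCutPoint A y
    · exact Or.inr hc
    · refine Or.inl ⟨?_, ?_⟩
      · have h : {u | A u y} = {x} :=
          core flipMSD hxy.symm h1 h2 (fun hcut => hc (cut_flip hcut))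
        show ({u | A u y}).ncard = 1
        rw [h, Set.ncard_singleton]
      · show ({u | A y u}).ncard = 1
        rw [core hMSD hxy.symm h2 h1 hc, Set.ncard_singleton]
end

section
/- Let D be a minimal strong digraph (MSD), C_q a directed cycle of length q contained in D, and D' the digraph obtained from D by deleting all arcs of C_q. Then no strong component of D' contains two consecutive vertices of C_q; consequently, the number λ of vertices of C_q contained in any single anchored strong component of D' satisfies 1 ≤ λ ≤ ⌊q/2⌋. -/
/-- No strong component of `D'` contains two consecutive vertices of `C_q`;
hence any anchored strong component contains `λ` vertices of `C_q` with `1 ≤ λ ≤ ⌊q/2⌋`. -/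
theorem stmt1 {V : Type*} [Fintype V] (A : V → V → Prop) (q : ℕ) (c : ZMod q → V)
    (hMSD : IsMSD A) (hc : IsCycleIn A q c) :
    (∀ i : ZMod q, ¬ MutReach (DelCycle A q c) (c i) (c (i + 1))) ∧
    ∀ S : Set V, IsSC (DelCycle A q c) S → (∃ i : ZMod q, c i ∈ S) →
      1 ≤ (S ∩ Set.range c).ncard ∧ (S ∩ Set.range c).ncard ≤ q / 2 := by
  have hq : 2 ≤ q := hc.1
  haveI : NeZero q := ⟨by omega⟩
  have key : ∀ i : ZMod q, ¬ MutReach (DelCycle A q c) (c i) (c (i + 1)) := by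
    intro i h
    apply hMSD.2 (c i) (c (i+1)) (hc.2.2 i)
    set B : V → V → Prop := fun x y => A x y ∧ ¬(x = c i ∧ y = c (i+1)) with hB
    have hDB : ∀ x y, DelCycle A q c x y → B x y := by
      intro x y hxy
      exact ⟨hxy.1, fun ⟨hx, hy⟩ => hxy.2 ⟨i, hx, hy⟩⟩
    have hpath : Relation.ReflTransGen B (c i) (c (i+1)) :=
      Relation.ReflTransGen.mono hDB _ _ h.1
    intro u v
    have h0 := hMSD.1 u v
    induction h0 with
    | refl => exact .refl
    | @tail b d hab hbd ih =>
      by_cases h' : b = c i ∧ d = c (i+1)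
      · obtain ⟨rfl, rfl⟩ := h'
        exact ih.trans hpath
      · exact ih.tail ⟨hbd, h'⟩
  refine ⟨key, ?_⟩
  rintro S ⟨v, rfl⟩ ⟨i0, hi0⟩
  set S : Set V := {u | MutReach (DelCycle A q c) v u} with hS
  have hcons : ∀ i : ZMod q, c i ∈ S → c (i+1) ∉ S := by
    intro i hi hj
    exact key i ⟨hi.2.trans hj.1, hj.2.trans hi.1⟩
  -- the index set
  classical
  set F : Finset (ZMod q) := Finset.univ.filter (fun i => c i ∈ S) with hF
  have himg : S ∩ Set.range c = c '' ↑F := by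
    ext x
    simp only [Set.mem_inter_iff, Set.mem_range, Set.mem_image, Finset.coe_filter,
      Finset.mem_univ, true_and, Set.mem_setOf_eq, hF]
    constructor
    · rintro ⟨hx, j, rfl⟩; exact ⟨j, hx, rfl⟩
    · rintro ⟨j, hj, rfl⟩; exact ⟨hj, j, rfl⟩
  have hcard : (S ∩ Set.range c).ncard = F.card := by
    rw [himg, Set.ncard_image_of_injective _ hc.2.1, Set.ncard_coe_finset]
  have hdisj : Disjoint F (F.image (· + 1)) := by
    rw [Finset.disjoint_left]
    intro a ha hb
    simp only [Finset.mem_image, hF, Finset.mem_filter, Finset.mem_univ, true_and] at ha hb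
    obtain ⟨j, hj, rfl⟩ := hb
    exact hcons j hj ha
  have hcard2 : F.card + F.card ≤ q := by
    have h1 : (F.image (· + 1)).card = F.card :=
      Finset.card_image_of_injective _ (add_left_injective 1)
    have h2 : (F ∪ F.image (· + 1)).card = F.card + F.card := by
      rw [Finset.card_union_of_disjoint hdisj, h1]
    have h3 : (F ∪ F.image (· + 1)).card ≤ Fintype.card (ZMod q) :=
      Finset.card_le_card (Finset.subset_univ _) |>.trans_eq (Finset.card_univ)
    rw [h2, ZMod.card] at h3
    exact h3
  have hne : 1 ≤ F.card := by
    have : i0 ∈ F := by simp [hF, hi0]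
    exact Finset.card_pos.mpr ⟨i0, this⟩
  constructor
  · omega
  · omega
end

section
/- Let D be a minimal strong digraph (MSD), C_q a directed cycle of length q contained in D, and D' the digraph obtained from D by deleting all arcs of C_q. If two anchored strong components S_1 and S_2 of D' are cut, then no vertex of C_q belonging to S_1 is consecutive on C_q with a vertex of C_q belonging to S_2. -/
private lemma reroute {V : Type*} {A : V → V → Prop} {a b : V}
    (h : Relation.ReflTransGen (fun x y => A x y ∧ ¬(x = a ∧ y = b)) a b)
    {u v : V} (huv : Relation.ReflTransGen A u v) :
    Relation.ReflTransGen (fun x y => A x y ∧ ¬(x = a ∧ y = b)) u v := by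
  induction huv with
  | refl => exact .refl
  | @tail p r _ hstep ih =>
    by_cases hab : p = a ∧ r = b
    · exact ih.trans (by rw [hab.1, hab.2]; exact h)
    · exact ih.tail ⟨hstep, hab⟩

private lemma cycle_seg {V : Type*} {A : V → V → Prop} {q : ℕ} {c : ZMod q → V}
    (hc : IsCycleIn A q c) (i s : ZMod q) (n : ℕ)
    (hn : ∀ k < n, s + (k : ZMod q) ≠ i) :
    Relation.ReflTransGen (fun x y => A x y ∧ ¬(x = c i ∧ y = c (i + 1)))
      (c s) (c (s + (n : ZMod q))) := by
  induction n with
  | zero => simpa using Relation.ReflTransGen.refl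
  | succ m ih =>
    have hm := ih (fun k hk => hn k (by omega))
    have hcast : s + ((m + 1 : ℕ) : ZMod q) = (s + (m : ZMod q)) + 1 := by push_cast; ring
    rw [hcast]
    refine hm.tail ⟨hc.2.2 _, ?_⟩
    rintro ⟨h1, -⟩
    exact hn m (by omega) (hc.2.1 h1)

private lemma seg_avoid {q : ℕ} [NeZero q] {i s : ZMod q} {n : ℕ}
    (h : n ≤ (i - s).val) : ∀ k < n, s + (k : ZMod q) ≠ i := by
  intro k hk he
  have hq : (i - s).val < q := ZMod.val_lt _
  have hkq : k < q := by omega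
  have h2 : (i - s) = (k : ZMod q) := by rw [← he]; ring
  have h3 : (i - s).val = k := by rw [h2, ZMod.val_cast_of_lt hkq]
  omega

private lemma val_sub' {q : ℕ} [NeZero q] (x y : ZMod q) :
    (x - y).val = (x.val + q - y.val) % q := by
  have hy : y.val ≤ q := (ZMod.val_lt y).le
  have h : ((x.val + q - y.val : ℕ) : ZMod q) = x - y := by
    have h1 : x.val + q - y.val = x.val + (q - y.val) := by omega
    rw [h1, Nat.cast_add, Nat.cast_sub hy]
    simp [ZMod.natCast_val, ZMod.cast_id, ZMod.natCast_self]
    ring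
  rw [← h, ZMod.val_natCast]

private lemma val_sub_cases {q : ℕ} [NeZero q] (x y : ZMod q) :
    (y.val ≤ x.val ∧ (x - y).val = x.val - y.val) ∨
    (x.val < y.val ∧ (x - y).val = x.val + q - y.val) := by
  have hx := ZMod.val_lt x; have hy := ZMod.val_lt y
  rw [val_sub']
  rcases le_or_gt y.val x.val with h | h
  · left; refine ⟨h, ?_⟩
    have h2 : x.val + q - y.val = q + (x.val - y.val) := by omega
    rw [h2, Nat.add_mod_left, Nat.mod_eq_of_lt (by omega)]
  · right; exact ⟨h, Nat.mod_eq_of_lt (by omega)⟩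

private lemma key_lemma_s2 {V : Type*} {A : V → V → Prop} {q : ℕ} {c : ZMod q → V}
    (hMSD : IsMSD A) (hc : IsCycleIn A q c)
    {Ssrc Stgt : Set V} (hsrc : IsSC (DelCycle A q c) Ssrc)
    (htgt : IsSC (DelCycle A q c) Stgt)
    {i s t : ZMod q} (hi : c i ∈ Ssrc) (hi1 : c (i + 1) ∈ Stgt)
    (hs : c s ∈ Ssrc) (ht : c t ∈ Stgt)
    (hval : (t - s).val ≤ (i - s).val) : False := by
  haveI : NeZero q := ⟨by have := hc.1; omega⟩
  have hsub : ∀ x y, DelCycle A q c x y →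
      (A x y ∧ ¬(x = c i ∧ y = c (i + 1))) := by
    rintro x y ⟨hxy, hno⟩
    exact ⟨hxy, fun hh => hno ⟨i, hh.1, hh.2⟩⟩
  obtain ⟨v, hv⟩ := hsrc
  obtain ⟨w, hw⟩ := htgt
  rw [hv] at hi hs
  rw [hw] at hi1 ht
  have p1 : Relation.ReflTransGen (fun x y => A x y ∧ ¬(x = c i ∧ y = c (i + 1)))
      (c i) (c s) := Relation.ReflTransGen.mono hsub _ _ (hi.2.trans hs.1)
  have p3 : Relation.ReflTransGen (fun x y => A x y ∧ ¬(x = c i ∧ y = c (i + 1)))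
      (c t) (c (i + 1)) := Relation.ReflTransGen.mono hsub _ _ (ht.2.trans hi1.1)
  have p2 : Relation.ReflTransGen (fun x y => A x y ∧ ¬(x = c i ∧ y = c (i + 1)))
      (c s) (c t) := by
    have hseg := cycle_seg hc i s ((t - s).val) (seg_avoid hval)
    have heq : s + (((t - s).val : ℕ) : ZMod q) = t := by
      rw [ZMod.natCast_val, ZMod.cast_id]; ring
    rwa [heq] at hseg
  have hpath := (p1.trans p2).trans p3
  exact hMSD.2 (c i) (c (i + 1)) (hc.2.2 i)
    (fun u v => reroute hpath (hMSD.1 u v))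

/-- If two anchored strong components `S₁, S₂` of `D'` are cut, then no
vertex of `C_q` in `S₁` is consecutive on `C_q` with a vertex of `C_q` in `S₂`. -/
theorem stmt2 {V : Type*} [Fintype V] (A : V → V → Prop) (q : ℕ) (c : ZMod q → V)
    (hMSD : IsMSD A) (hc : IsCycleIn A q c) (S₁ S₂ : Set V)
    (hS₁ : IsSC (DelCycle A q c) S₁) (hS₂ : IsSC (DelCycle A q c) S₂) (hne : S₁ ≠ S₂)
    (hcut : ∃ i₁ j₁ i₂ j₂ : ZMod q,
      c i₁ ∈ S₁ ∧ c i₂ ∈ S₁ ∧ c j₁ ∈ S₂ ∧ c j₂ ∈ S₂ ∧ CyclicOrder4 i₁ j₁ i₂ j₂) :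
    ∀ i : ZMod q, ¬(c i ∈ S₁ ∧ c (i + 1) ∈ S₂) ∧ ¬(c i ∈ S₂ ∧ c (i + 1) ∈ S₁) := by
  haveI : NeZero q := ⟨by have := hc.1; omega⟩
  obtain ⟨i₁, j₁, i₂, j₂, hm1, hm2, hm3, hm4, hb0, hbc, hcd⟩ := hcut
  have hdq : (j₂ - i₁).val < q := ZMod.val_lt _
  intro i
  constructor
  · rintro ⟨hiS, hi1S⟩
    rcases le_or_gt ((j₁ - i₁).val) ((i - i₁).val) with h | h
    · exact key_lemma_s2 hMSD hc hS₁ hS₂ hiS hi1S hm1 hm3 h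
    · refine key_lemma_s2 hMSD hc hS₁ hS₂ hiS hi1S hm2 hm4 ?_
      have e1 : i - i₂ = (i - i₁) - (i₂ - i₁) := by ring
      have e2 : j₂ - i₂ = (j₂ - i₁) - (i₂ - i₁) := by ring
      have A1 := val_sub_cases (i - i₁) (i₂ - i₁)
      have A2 := val_sub_cases (j₂ - i₁) (i₂ - i₁)
      rw [← e1] at A1
      rw [← e2] at A2
      omega
  · rintro ⟨hiS, hi1S⟩
    rcases le_or_gt ((j₂ - i₁).val) ((i - i₁).val) with h | h
    · refine key_lemma_s2 hMSD hc hS₂ hS₁ hiS hi1S hm3 hm2 ?_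
      have e1 : i - j₁ = (i - i₁) - (j₁ - i₁) := by ring
      have e2 : i₂ - j₁ = (i₂ - i₁) - (j₁ - i₁) := by ring
      have A1 := val_sub_cases (i - i₁) (j₁ - i₁)
      have A2 := val_sub_cases (i₂ - i₁) (j₁ - i₁)
      rw [← e1] at A1
      rw [← e2] at A2
      omega
    · refine key_lemma_s2 hMSD hc hS₂ hS₁ hiS hi1S hm4 hm1 ?_
      have e1 : i - j₂ = (i - i₁) - (j₂ - i₁) := by ring
      have e2 : i₁ - j₂ = (i₁ - i₁) - (j₂ - i₁) := by ring
      have hz : (i₁ - i₁).val = 0 := by rw [sub_self, ZMod.val_zero]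
      have A1 := val_sub_cases (i - i₁) (j₂ - i₁)
      have A2 := val_sub_cases (i₁ - i₁) (j₂ - i₁)
      rw [← e1] at A1
      rw [← e2] at A2
      omega
end

section
/- Let D be a minimal strong digraph (MSD), C_q a directed cycle of length q contained in D, and D' the digraph obtained from D by deleting all arcs of C_q. If a strong component S of D' is an initial strong component (no arc of D' enters S) or a terminal strong component (no arc of D' leaves S), then S contains at least one vertex of C_q. -/
theorem Relation.ReflTransGen.exists_rel_notMem_mem {V : Type*} {R : V → V → Prop} {S : Set V}
    {a b : V} (h : Relation.ReflTransGen R a b) (ha : a ∉ S) (hb : b ∈ S) :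
    ∃ x y, R x y ∧ x ∉ S ∧ y ∈ S := by
  induction h with
  | refl => exact absurd hb ha
  | @tail m b _ hmb ih =>
    by_cases hm : m ∈ S
    · exact ih hm
    · exact ⟨m, b, hmb, hm, hb⟩

theorem Relation.ReflTransGen.exists_rel_mem_notMem {V : Type*} {R : V → V → Prop} {S : Set V}
    {a b : V} (h : Relation.ReflTransGen R a b) (ha : a ∈ S) (hb : b ∉ S) :
    ∃ x y, R x y ∧ x ∈ S ∧ y ∉ S := by
  simpa only [Set.mem_compl_iff, not_not, and_comm (a := _ ∉ S)] using
    h.exists_rel_notMem_mem (S := Sᶜ) (not_not.mpr ha) hb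

section DelCycle

variable {V : Type*} {A : V → V → Prop}

theorem delCycle_or_cycle_arc (q : ℕ) (c : ZMod q → V) {x y : V} (hxy : A x y) :
    DelCycle A q c x y ∨ ∃ i : ZMod q, x = c i ∧ y = c (i + 1) := by
  by_cases hcyc : ∃ i : ZMod q, x = c i ∧ y = c (i + 1)
  · exact .inr hcyc
  · exact .inl ⟨hxy, hcyc⟩

variable {q : ℕ} {c : ZMod q → V}

/-- The first arc of a path from the cycle into `S` that enters `S` is either an arc of `D'`
or an arc of the cycle, whose head then lies in `S`. -/
theorem exists_cycle_mem_of_not_exists_delCycle_into (hA : StronglyConnected A) {S : Set V}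
    {v : V} (hv : v ∈ S) (hin : ¬ ∃ x y : V, DelCycle A q c x y ∧ x ∉ S ∧ y ∈ S) :
    ∃ i : ZMod q, c i ∈ S := by
  by_contra! hc
  obtain ⟨x, y, hxy, hx, hy⟩ := (hA (c 0) v).exists_rel_notMem_mem (hc 0) hv
  rcases delCycle_or_cycle_arc q c hxy with hD | ⟨i, -, rfl⟩
  · exact hin ⟨x, y, hD, hx, hy⟩
  · exact hc (i + 1) hy

theorem exists_cycle_mem_of_not_exists_delCycle_out (hA : StronglyConnected A) {S : Set V}
    {v : V} (hv : v ∈ S) (hout : ¬ ∃ x y : V, DelCycle A q c x y ∧ x ∈ S ∧ y ∉ S) :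
    ∃ i : ZMod q, c i ∈ S := by
  by_contra! hc
  obtain ⟨x, y, hxy, hx, hy⟩ := (hA v (c 0)).exists_rel_mem_notMem hv (hc 0)
  rcases delCycle_or_cycle_arc q c hxy with hD | ⟨i, rfl, -⟩
  · exact hout ⟨x, y, hD, hx, hy⟩
  · exact hc i hx

end DelCycle

theorem stmt3_general {V : Type*} (A : V → V → Prop) (q : ℕ) (c : ZMod q → V)
    (hMSD : IsMSD A) (S : Set V) (hS : IsSC (DelCycle A q c) S)
    (h : (¬ ∃ x y : V, DelCycle A q c x y ∧ x ∉ S ∧ y ∈ S) ∨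
         (¬ ∃ x y : V, DelCycle A q c x y ∧ x ∈ S ∧ y ∉ S)) :
    ∃ i : ZMod q, c i ∈ S := by
  obtain ⟨v, rfl⟩ := hS
  have hv : v ∈ {u | MutReach (DelCycle A q c) v u} := ⟨.refl, .refl⟩
  rcases h with hin | hout
  · exact exists_cycle_mem_of_not_exists_delCycle_into hMSD.1 hv hin
  · exact exists_cycle_mem_of_not_exists_delCycle_out hMSD.1 hv hout

/-- Every initial or terminal strong component of `D'` contains a vertex of `C_q`. -/
theorem stmt3 {V : Type*} [Fintype V] (A : V → V → Prop) (q : ℕ) (c : ZMod q → V)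
    (hMSD : IsMSD A) (hc : IsCycleIn A q c) (S : Set V) (hS : IsSC (DelCycle A q c) S)
    (h : (¬ ∃ x y : V, DelCycle A q c x y ∧ x ∉ S ∧ y ∈ S) ∨
         (¬ ∃ x y : V, DelCycle A q c x y ∧ x ∈ S ∧ y ∉ S)) :
    ∃ i : ZMod q, c i ∈ S :=
  stmt3_general A q c hMSD S hS h
end

section
/- Let D be a minimal strong digraph (MSD), C_q a directed cycle of length q contained in D, and D' the digraph obtained from D by deleting all arcs of C_q. Let S be a strong component of D' and let u, v be two distinct vertices of S such that D contains an arc from u to some vertex a not in S and an arc from some vertex b not in S to v. Then D contains a directed path from u to v that uses no arc of S. -/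
/-!
A strong component `S` of `D'` is convex for reachability in `D'`. Follow a path of `D` from
`u` through `a` back to `v ∈ S`: it cannot return to `S` using `D'`-arcs only, so it uses an
arc of `C_q`, and before that it never runs along an arc of `D'` inside `S`. Hence `u` reaches
a vertex of `C_q` avoiding the arcs of `S`; dually some vertex of `C_q` reaches `v` in this
way, and the two are joined along `C_q`, whose arcs are not arcs of `D'`.
-/

open Relation Function

section

variable {V : Type*}

def DelArcsWithin (A B : V → V → Prop) (S : Set V) : V → V → Prop :=
  fun x y => A x y ∧ ¬(x ∈ S ∧ y ∈ S ∧ B x y)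

namespace DelArcsWithin

variable {A B : V → V → Prop} {S : Set V} {x y : V}

theorem of_not_mem_left (h : A x y) (hx : x ∉ S) : DelArcsWithin A B S x y :=
  ⟨h, fun h' => hx h'.1⟩

theorem of_not_mem_right (h : A x y) (hy : y ∉ S) : DelArcsWithin A B S x y :=
  ⟨h, fun h' => hy h'.2.1⟩

theorem of_not_rel (h : A x y) (hB : ¬B x y) : DelArcsWithin A B S x y :=
  ⟨h, fun h' => hB h'.2.2⟩

theorem swap_eq (A B : V → V → Prop) (S : Set V) :
    DelArcsWithin (swap A) (swap B) S = swap (DelArcsWithin A B S) := by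
  ext x y
  simp only [DelArcsWithin, swap, and_left_comm]

end DelArcsWithin

section StrongComponent

variable {A B : V → V → Prop} {S : Set V}

theorem IsSC.swap (hS : IsSC B S) : IsSC (swap B) S := by
  obtain ⟨w, rfl⟩ := hS
  refine ⟨w, Set.ext fun x => ?_⟩
  simp only [Set.mem_ofPred_eq, MutReach, reflTransGen_swap, and_comm]

theorem IsSC.mem_of_reflTransGen (hS : IsSC B S) {x y z : V} (hx : x ∈ S)
    (hxy : ReflTransGen B x y) (hyz : ReflTransGen B y z) (hz : z ∈ S) : y ∈ S := by
  obtain ⟨w, rfl⟩ := hS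
  exact ⟨hx.1.trans hxy, hyz.trans hz.2⟩

theorem exists_arc_not_rel_of_exit (hS : IsSC B S) {u a w : V} (hu : u ∈ S) (hua : A u a)
    (ha : a ∉ S) (haw : ReflTransGen A a w) (hw : w ∈ S) :
    ∃ x y, A x y ∧ ¬B x y ∧ ReflTransGen (DelArcsWithin A B S) u x := by
  by_contra! h
  have hB : ∀ x y, A x y → ReflTransGen (DelArcsWithin A B S) u x → B x y :=
    fun x y hxy hux => by_contra fun hB => h x y hxy hB hux
  have hBua := hB u a hua .refl
  suffices ∀ y, ReflTransGen A a y →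
      y ∉ S ∧ ReflTransGen (DelArcsWithin A B S) u y ∧ ReflTransGen B a y from
    (this w haw).1 hw
  intro y hy
  induction hy with
  | refl => exact ⟨ha, .single (.of_not_mem_right hua ha), .refl⟩
  | @tail x y _ hxy ih =>
    obtain ⟨hx, hux, hax⟩ := ih
    have hay := hax.tail (hB x y hxy hux)
    exact ⟨fun hy => ha (hS.mem_of_reflTransGen hu (.single hBua) hay hy),
      hux.tail (.of_not_mem_left hxy hx), hay⟩

theorem exists_arc_not_rel_of_entry (hS : IsSC B S) {v b w : V} (hv : v ∈ S) (hbv : A b v)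
    (hb : b ∉ S) (hwb : ReflTransGen A w b) (hw : w ∈ S) :
    ∃ x y, A x y ∧ ¬B x y ∧ ReflTransGen (DelArcsWithin A B S) y v := by
  obtain ⟨x, y, hxy, hB, hvx⟩ := exists_arc_not_rel_of_exit (A := swap A) hS.swap hv hbv hb
    (reflTransGen_swap.2 hwb) hw
  rw [DelArcsWithin.swap_eq, reflTransGen_swap] at hvx
  exact ⟨y, x, hxy, hB, hvx⟩

end StrongComponent

theorem reflTransGen_of_cycle {R : V → V → Prop} {q : ℕ} [NeZero q] {c : ZMod q → V}
    (hc : ∀ i, R (c i) (c (i + 1))) (i j : ZMod q) : ReflTransGen R (c i) (c j) := by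
  have hk : ∀ k : ℕ, ReflTransGen R (c i) (c (i + k)) := by
    intro k
    induction k with
    | zero => simpa using ReflTransGen.refl
    | succ k ih => simpa [add_assoc] using ih.tail (hc (i + k))
  simpa using hk (j - i).val

theorem exists_eq_of_not_delCycle {A : V → V → Prop} {q : ℕ} {c : ZMod q → V} {x y : V}
    (h : A x y) (h' : ¬DelCycle A q c x y) : ∃ i, x = c i ∧ y = c (i + 1) := by
  simpa [DelCycle, h] using h'

end

theorem stmt4_general {V : Type*} (A : V → V → Prop) (q : ℕ) (c : ZMod q → V)
    (hMSD : IsMSD A) (hc : IsCycleIn A q c) (S : Set V) (hS : IsSC (DelCycle A q c) S)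
    (u v a b : V) (hu : u ∈ S) (hv : v ∈ S)
    (ha : A u a) (haS : a ∉ S) (hb : A b v) (hbS : b ∉ S) :
    Relation.ReflTransGen
      (fun x y => A x y ∧ ¬(x ∈ S ∧ y ∈ S ∧ DelCycle A q c x y)) u v := by
  obtain ⟨hq, -, hcyc⟩ := hc
  have : NeZero q := ⟨by omega⟩
  change ReflTransGen (DelArcsWithin A (DelCycle A q c) S) u v
  obtain ⟨x, y, hxy, hxy', hux⟩ := exists_arc_not_rel_of_exit hS hu ha haS (hMSD.1 a v) hv
  obtain ⟨x', y', hxy₂, hxy₂', hyv⟩ := exists_arc_not_rel_of_entry hS hv hb hbS (hMSD.1 u b) hu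
  obtain ⟨i, rfl, -⟩ := exists_eq_of_not_delCycle hxy hxy'
  obtain ⟨j, -, rfl⟩ := exists_eq_of_not_delCycle hxy₂ hxy₂'
  have hcycle : ∀ k, DelArcsWithin A (DelCycle A q c) S (c k) (c (k + 1)) :=
    fun k => .of_not_rel (hcyc k) fun h => h.2 ⟨k, rfl, rfl⟩
  exact hux.trans ((reflTransGen_of_cycle hcycle i (j + 1)).trans hyv)

/-- If `u ≠ v` lie in a strong component `S` of `D'`, `D` has an arc from `u`
leaving `S` and an arc into `v` entering `S`, then `D` has a `u`-`v` path using no arc of `S`. -/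
theorem stmt4 {V : Type*} [Fintype V] (A : V → V → Prop) (q : ℕ) (c : ZMod q → V)
    (hMSD : IsMSD A) (hc : IsCycleIn A q c) (S : Set V) (hS : IsSC (DelCycle A q c) S)
    (u v a b : V) (hu : u ∈ S) (hv : v ∈ S) (huv : u ≠ v)
    (ha : A u a) (haS : a ∉ S) (hb : A b v) (hbS : b ∉ S) :
    Relation.ReflTransGen
      (fun x y => A x y ∧ ¬(x ∈ S ∧ y ∈ S ∧ DelCycle A q c x y)) u v :=
  stmt4_general A q c hMSD hc S hS u v a b hu hv ha haS hb hbS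
end

section
/- Let D be a minimal strong digraph (MSD), C_q a directed cycle of length q contained in D, and D' the digraph obtained from D by deleting all arcs of C_q. If a strong component of D' is a directed cycle (as a subdigraph of D'), then at least one of its vertices is a linear vertex of D. Equivalently, a directed cycle none of whose vertices is linear in D cannot be a strong component of D'. -/
/-- If a strong component of `D'` is a directed cycle (as a subdigraph of `D'`),
then one of its vertices is a linear vertex of `D`. -/
theorem stmt5 {V : Type*} [Fintype V] (A : V → V → Prop) (q : ℕ) (c : ZMod q → V)
    (hMSD : IsMSD A) (hc : IsCycleIn A q c) (S : Set V) (hS : IsSC (DelCycle A q c) S)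
    (hcyc : ∃ p : ℕ, 2 ≤ p ∧ ∃ d : ZMod p → V, Function.Injective d ∧ S = Set.range d ∧
      ∀ i j : ZMod p, DelCycle A q c (d i) (d j) ↔ j = i + 1) :
    ∃ v ∈ S, IsLinear A v := by
  classical
  by_contra hlin
  push_neg at hlin
  obtain ⟨p, hp2, d, hdinj, hSrange, hdarc⟩ := hcyc
  obtain ⟨hq2, hcinj, hcarc⟩ := hc
  have hA : StronglyConnected A := hMSD.1
  -- membership facts
  have memS : ∀ i : ZMod p, d i ∈ S := by
    intro i; rw [hSrange]; exact ⟨i, rfl⟩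
  have idxS : ∀ u, u ∈ S → ∃ i : ZMod p, u = d i := by
    intro u hu; rw [hSrange] at hu; obtain ⟨i, hi⟩ := hu; exact ⟨i, hi.symm⟩
  -- NAP: no alternative path for any arc of an MSD
  have NAP : ∀ a b : V, A a b →
      ¬ Relation.ReflTransGen (fun x y => A x y ∧ ¬(x = a ∧ y = b)) a b := by
    intro a b hab hreach
    apply hMSD.2 a b hab
    intro u v
    have h0 := hA u v
    induction h0 with
    | refl => exact Relation.ReflTransGen.refl
    | @tail w₁ v h1 h2 ih =>
      by_cases hq : w₁ = a ∧ v = b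
      · obtain ⟨h3, h4⟩ := hq
        subst h3; subst h4
        exact ih.trans hreach
      · exact ih.tail ⟨h2, hq⟩
  -- index arithmetic helper
  have toIdx : ∀ (n : ℕ), n ≠ 0 → ∀ i j : ZMod n, ∃ t : ℕ, i + (t : ZMod n) = j := by
    intro n hn i j
    haveI : NeZero n := ⟨hn⟩
    refine ⟨(j - i).val, ?_⟩
    rw [ZMod.natCast_val, ZMod.cast_id]
    ring
  have hp0 : p ≠ 0 := by omega
  have hq0 : q ≠ 0 := by omega
  -- generic walks along the spanning cycle of S
  have GENWALK : ∀ (R : V → V → Prop), (∀ i : ZMod p, R (d i) (d (i + 1))) →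
      ∀ i j : ZMod p, Relation.ReflTransGen R (d i) (d j) := by
    intro R hR i j
    obtain ⟨t, ht⟩ := toIdx p hp0 i j
    rw [← ht]
    clear ht
    induction t with
    | zero => simpa using Relation.ReflTransGen.refl
    | succ t ih =>
      have hcast : ((t + 1 : ℕ) : ZMod p) = (t : ZMod p) + 1 := by push_cast; ring
      rw [hcast, ← add_assoc]
      exact ih.tail (hR _)
  -- generic walks along the cycle C_q
  have GENWALKQ : ∀ (R : V → V → Prop), (∀ t : ZMod q, R (c t) (c (t + 1))) →
      ∀ i j : ZMod q, Relation.ReflTransGen R (c i) (c j) := by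
    intro R hR i j
    obtain ⟨t, ht⟩ := toIdx q hq0 i j
    rw [← ht]
    clear ht
    induction t with
    | zero => simpa using Relation.ReflTransGen.refl
    | succ t ih =>
      have hcast : ((t + 1 : ℕ) : ZMod q) = (t : ZMod q) + 1 := by push_cast; ring
      rw [hcast, ← add_assoc]
      exact ih.tail (hR _)
  -- the arcs of the spanning cycle of S
  have arcCycD' : ∀ i : ZMod p, DelCycle A q c (d i) (d (i + 1)) :=
    fun i => (hdarc i (i + 1)).mpr rfl
  have arcCyc : ∀ i : ZMod p, A (d i) (d (i + 1)) := fun i => (arcCycD' i).1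
  have arcCq : ∀ t : ZMod q, A (c t) (c (t + 1)) := hcarc
  -- no two consecutive vertices of C_q lie in S
  have NOCONSEC : ∀ t : ZMod q, c t ∈ S → c (t + 1) ∈ S → False := by
    intro t h1 h2
    obtain ⟨i, hi⟩ := idxS _ h1
    obtain ⟨j, hj⟩ := idxS _ h2
    have harc : A (d i) (d j) := by rw [← hi, ← hj]; exact arcCq t
    have hnotDel : ¬ DelCycle A q c (d i) (d j) := by
      intro hD
      exact hD.2 ⟨t, hi.symm, hj.symm⟩
    have hji : j ≠ i + 1 := by
      intro h
      subst h
      exact hnotDel (arcCycD' i)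
    have hno : ∀ l : ZMod p, ¬ (d l = d i ∧ d (l + 1) = d j) := by
      rintro l ⟨ha, hb⟩
      have hl : l = i := hdinj ha
      subst hl
      exact hji (hdinj hb).symm
    have hw := GENWALK (fun x y => A x y ∧ ¬(x = d i ∧ y = d j))
      (fun l => ⟨arcCyc l, hno l⟩) i j
    exact NAP (d i) (d j) harc hw
  -- arcs of D inside S are exactly the arcs of the spanning cycle
  have L0 : ∀ i j : ZMod p, A (d i) (d j) → j = i + 1 := by
    intro i j h
    by_cases hD : DelCycle A q c (d i) (d j)
    · exact (hdarc i j).mp hD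
    · have hpair : ∃ t : ZMod q, d i = c t ∧ d j = c (t + 1) := by
        by_contra hn
        exact hD ⟨h, hn⟩
      obtain ⟨t, h1, h2⟩ := hpair
      exact absurd (NOCONSEC t (h1 ▸ memS i) (h2 ▸ memS j)) (fun h => h)
  -- every vertex of the cycle has an extra arc crossing the boundary of S
  have extraOf : ∀ i : ZMod p, (∃ y, y ∉ S ∧ A (d i) y) ∨ (∃ x, x ∉ S ∧ A x (d i)) := by
    intro i
    have hnl := hlin (d i) (memS i)
    rw [IsLinear, not_and_or] at hnl
    rcases hnl with hin | hout
    · right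
      have hmem : d (i - 1) ∈ {u | A u (d i)} := by
        have := arcCyc (i - 1)
        rwa [sub_add_cancel] at this
      have hex : ∃ x, A x (d i) ∧ x ≠ d (i - 1) := by
        by_contra hqq
        push_neg at hqq
        apply hin
        have hset : {u | A u (d i)} = {d (i - 1)} :=
          Set.eq_singleton_iff_unique_mem.mpr ⟨hmem, fun x hx => hqq x hx⟩
        show ({u | A u (d i)}).ncard = 1
        rw [hset, Set.ncard_singleton]
      obtain ⟨x, hx, hxne⟩ := hex
      refine ⟨x, ?_, hx⟩
      intro hxS
      obtain ⟨j, rfl⟩ := idxS x hxS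
      have hji := L0 j i hx
      apply hxne
      rw [hji]
      congr 1
      ring
    · left
      have hmem : d (i + 1) ∈ {u | A (d i) u} := arcCyc i
      have hex : ∃ y, A (d i) y ∧ y ≠ d (i + 1) := by
        by_contra hqq
        push_neg at hqq
        apply hout
        have hset : {u | A (d i) u} = {d (i + 1)} :=
          Set.eq_singleton_iff_unique_mem.mpr ⟨hmem, fun x hx => hqq x hx⟩
        show ({u | A (d i) u}).ncard = 1
        rw [hset, Set.ncard_singleton]
      obtain ⟨y, hy, hyne⟩ := hex
      refine ⟨y, ?_, hy⟩
      intro hyS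
      obtain ⟨j, rfl⟩ := idxS y hyS
      have hji := L0 i j hy
      exact hyne (by rw [hji])
  -- some vertex lies outside S
  have hout : ∃ w, w ∉ S := by
    by_contra h
    push_neg at h
    exact NOCONSEC 0 (h _) (h _)
  obtain ⟨w0, hw0⟩ := hout
  -- existence of out-crossing and in-crossing arcs
  have FX : ∀ u v, Relation.ReflTransGen A u v → u ∈ S → v ∉ S →
      ∃ (i : ZMod p) (y : V), y ∉ S ∧ A (d i) y := by
    intro u v h
    induction h with
    | refl => intro h1 h2; exact absurd h1 h2
    | @tail w₁ v h1 h2 ih =>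
      intro hu hv
      by_cases hm : w₁ ∈ S
      · obtain ⟨i, rfl⟩ := idxS _ hm
        exact ⟨i, v, hv, h2⟩
      · exact ih hu hm
  have FN : ∀ u v, Relation.ReflTransGen A u v → u ∉ S → v ∈ S →
      ∃ (i : ZMod p) (x : V), x ∉ S ∧ A x (d i) := by
    intro u v h
    induction h with
    | refl => intro h1 h2; exact absurd h2 h1
    | @tail w₁ v h1 h2 ih =>
      intro hu hv
      by_cases hm : w₁ ∈ S
      · exact ih hu hm
      · obtain ⟨i, rfl⟩ := idxS _ hv
        exact ⟨i, w₁, hm, h2⟩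
  obtain ⟨b0, y0, hy0S, hy0⟩ := FX (d 0) w0 (hA _ _) (memS 0) hw0
  obtain ⟨a0, x0, hx0S, hx0⟩ := FN w0 (d 0) (hA _ _) hw0 (memS 0)
  -- the scan: find m with an out-crossing at m and an in-crossing at m+1
  set OutP : ZMod p → Prop := fun i => ∃ y, y ∉ S ∧ A (d i) y with hOutP
  set InP : ZMod p → Prop := fun i => ∃ x, x ∉ S ∧ A x (d i) with hInP
  have total : ∀ i, OutP i ∨ InP i := extraOf
  have hb0' : OutP b0 := ⟨y0, hy0S, hy0⟩
  have ha0' : InP a0 := ⟨x0, hx0S, hx0⟩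
  have hPex : ∃ t : ℕ, InP (b0 + ((t + 1 : ℕ) : ZMod p)) := by
    refine ⟨(a0 - b0 - 1).val, ?_⟩
    have : b0 + ((((a0 - b0 - 1).val) + 1 : ℕ) : ZMod p) = a0 := by
      push_cast
      haveI : NeZero p := ⟨hp0⟩
      rw [ZMod.natCast_val, ZMod.cast_id]
      ring
    rw [this]
    exact ha0'
  obtain ⟨t0, hP, hmin⟩ : ∃ t0 : ℕ, InP (b0 + ((t0 + 1 : ℕ) : ZMod p)) ∧
      ∀ s < t0, ¬ InP (b0 + ((s + 1 : ℕ) : ZMod p)) := by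
    exact ⟨Nat.find hPex, Nat.find_spec hPex, fun s hs => Nat.find_min hPex hs⟩
  have hOutAll : ∀ s : ℕ, s ≤ t0 → OutP (b0 + (s : ZMod p)) := by
    intro s
    induction s with
    | zero => intro _; simpa using hb0'
    | succ s ih =>
      intro hs
      rcases total (b0 + ((s + 1 : ℕ) : ZMod p)) with h | h
      · exact h
      · exact absurd h (hmin s (by omega))
  set m : ZMod p := b0 + (t0 : ZMod p) with hm_def
  have hmOut : OutP m := hOutAll t0 le_rfl
  have hmIn : InP (m + 1) := by
    have hcast : b0 + ((t0 + 1 : ℕ) : ZMod p) = m + 1 := by push_cast; ring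
    rw [hcast] at hP
    exact hP
  obtain ⟨y, hyS, hy⟩ := hmOut
  obtain ⟨x, hxS, hx⟩ := hmIn
  -- the three auxiliary relations
  set Ae : V → V → Prop := fun u v => A u v ∧ ¬(u = d m ∧ v = d (m + 1)) with hAe_def
  set Aout : V → V → Prop := fun u v => A u v ∧ u ∉ S ∧ v ∉ S with hAout_def
  set D' : V → V → Prop := DelCycle A q c with hD'_def
  have AoutAe : ∀ u v, Aout u v → Ae u v := by
    rintro u v ⟨h, hu, _⟩
    exact ⟨h, fun hp => hu (hp.1 ▸ memS m)⟩
  -- walks along C_q avoid the arc e_m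
  have CqAe : ∀ t : ZMod q, Ae (c t) (c (t + 1)) := by
    intro t
    refine ⟨arcCq t, ?_⟩
    rintro ⟨h1, h2⟩
    exact NOCONSEC t (h1 ▸ memS m) (h2 ▸ memS (m + 1))
  have CqWalk : ∀ i j : ZMod q, Relation.ReflTransGen Ae (c i) (c j) := GENWALKQ Ae CqAe
  -- D'-walks inside S
  have cycD' : ∀ i j : ZMod p, Relation.ReflTransGen D' (d i) (d j) := GENWALK D' arcCycD'
  -- maximality of the strong component S
  have mem_S_of : ∀ w, (∃ s, s ∈ S ∧ Relation.ReflTransGen D' s w) →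
      (∃ s', s' ∈ S ∧ Relation.ReflTransGen D' w s') → w ∈ S := by
    obtain ⟨v0, hv0⟩ := hS
    rintro w ⟨s, hs, h1⟩ ⟨s', hs', h2⟩
    rw [hv0] at hs hs' ⊢
    exact ⟨hs.1.trans h1, h2.trans hs'.2⟩
  -- first-entry decomposition
  have FE : ∀ u v, Relation.ReflTransGen A u v → u ∉ S →
      (Relation.ReflTransGen Aout u v) ∨
      (∃ x', x' ∉ S ∧ ∃ α' : ZMod p, Relation.ReflTransGen Aout u x' ∧ A x' (d α')) := by
    intro u v h
    induction h using Relation.ReflTransGen.head_induction_on with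
    | refl => intro _; exact Or.inl Relation.ReflTransGen.refl
    | @head u u₁ harc hrest ih =>
      intro huS
      by_cases h1 : u₁ ∈ S
      · obtain ⟨α, rfl⟩ := idxS _ h1
        exact Or.inr ⟨u, huS, α, Relation.ReflTransGen.refl, harc⟩
      · rcases ih h1 with hl | ⟨x', hx', α', hw, ha⟩
        · exact Or.inl (hl.head ⟨harc, huS, h1⟩)
        · exact Or.inr ⟨x', hx', α', hw.head ⟨harc, huS, h1⟩, ha⟩
  -- last-exit decomposition
  have LE : ∀ u v, Relation.ReflTransGen A u v → v ∉ S →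
      (u ∉ S ∧ Relation.ReflTransGen Aout u v) ∨
      (∃ (γ : ZMod p) (y'' : V), y'' ∉ S ∧ A (d γ) y'' ∧ Relation.ReflTransGen Aout y'' v) := by
    intro u v h
    induction h with
    | refl => intro hv; exact Or.inl ⟨hv, Relation.ReflTransGen.refl⟩
    | @tail w₁ v h1 h2 ih =>
      intro hvS
      by_cases hm1 : w₁ ∈ S
      · obtain ⟨γ, rfl⟩ := idxS _ hm1
        exact Or.inr ⟨γ, v, hvS, h2, Relation.ReflTransGen.refl⟩
      · rcases ih hm1 with ⟨huS, hw⟩ | ⟨γ, y'', hy'', ha, hw⟩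
        · exact Or.inl ⟨huS, hw.tail ⟨h2, hm1, hvS⟩⟩
        · exact Or.inr ⟨γ, y'', hy'', ha, hw.tail ⟨h2, hm1, hvS⟩⟩
  -- splitting an outside walk at the first C_q arc
  have SPLIT : ∀ u v, Relation.ReflTransGen Aout u v →
      (Relation.ReflTransGen (fun a b => D' a b ∧ a ∉ S ∧ b ∉ S) u v) ∨
      (∃ l : ZMod q, Relation.ReflTransGen Aout u (c l)) := by
    intro u v h
    induction h using Relation.ReflTransGen.head_induction_on with
    | refl => exact Or.inl Relation.ReflTransGen.refl
    | @head u u₁ harc hrest ih =>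
      by_cases hp : ∃ t : ZMod q, u = c t ∧ u₁ = c (t + 1)
      · obtain ⟨t, h1, _⟩ := hp
        exact Or.inr ⟨t, h1 ▸ Relation.ReflTransGen.refl⟩
      · rcases ih with hl | ⟨l, hw⟩
        · exact Or.inl (hl.head ⟨⟨harc.1, hp⟩, harc.2.1, harc.2.2⟩)
        · exact Or.inr ⟨l, hw.head harc⟩
  -- splitting an outside walk at the last C_q arc
  have SPLIT' : ∀ u v, Relation.ReflTransGen Aout u v →
      (Relation.ReflTransGen (fun a b => D' a b ∧ a ∉ S ∧ b ∉ S) u v) ∨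
      (∃ l : ZMod q, Relation.ReflTransGen Aout (c l) v) := by
    intro u v h
    induction h with
    | refl => exact Or.inl Relation.ReflTransGen.refl
    | @tail w₁ v h1 h2 ih =>
      by_cases hp : ∃ t : ZMod q, w₁ = c t ∧ v = c (t + 1)
      · obtain ⟨t, _, h2'⟩ := hp
        exact Or.inr ⟨t + 1, h2' ▸ Relation.ReflTransGen.refl⟩
      · rcases ih with hl | ⟨l, hw⟩
        · exact Or.inl (hl.tail ⟨⟨h2.1, hp⟩, h2.2.1, h2.2.2⟩)
        · exact Or.inr ⟨l, hw.tail h2⟩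
  -- anchor from y to some vertex of C_q, avoiding e_m
  have anchorY : ∃ j : ZMod q, Relation.ReflTransGen Ae y (c j) := by
    by_cases hpair : ∃ t : ZMod q, d m = c t ∧ y = c (t + 1)
    · obtain ⟨t, _, h2⟩ := hpair
      exact ⟨t + 1, h2 ▸ Relation.ReflTransGen.refl⟩
    · have hyD : D' (d m) y := ⟨hy, hpair⟩
      rcases FE y (c 0) (hA _ _) hyS with hl | ⟨x', hx'S, α', hw1, harc2⟩
      · exact ⟨0, Relation.ReflTransGen.mono AoutAe _ _ hl⟩
      · rcases SPLIT y x' hw1 with hD'w | ⟨l, hw2⟩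
        · by_cases hpair2 : ∃ t : ZMod q, x' = c t ∧ d α' = c (t + 1)
          · obtain ⟨t, h1, _⟩ := hpair2
            exact ⟨t, h1 ▸ (Relation.ReflTransGen.mono AoutAe _ _ hw1)⟩
          · exfalso
            apply hyS
            apply mem_S_of y ⟨d m, memS m, Relation.ReflTransGen.single hyD⟩
            refine ⟨d α', memS α', ?_⟩
            exact (Relation.ReflTransGen.mono (fun a b h => h.1) _ _ hD'w).tail ⟨harc2, hpair2⟩
        · exact ⟨l, Relation.ReflTransGen.mono AoutAe _ _ hw2⟩
  -- anchor from some vertex of C_q to x, avoiding e_m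
  have anchorX : ∃ l : ZMod q, Relation.ReflTransGen Ae (c l) x := by
    by_cases hpair : ∃ t : ZMod q, x = c t ∧ d (m + 1) = c (t + 1)
    · obtain ⟨t, h1, _⟩ := hpair
      exact ⟨t, h1 ▸ Relation.ReflTransGen.refl⟩
    · have hxD : D' x (d (m + 1)) := ⟨hx, hpair⟩
      rcases LE (d 0) x (hA _ _) hxS with ⟨h0S, _⟩ | ⟨γ, y'', hy''S, harc2, hw1⟩
      · exact absurd (memS 0) h0S
      · rcases SPLIT' y'' x hw1 with hD'w | ⟨l, hw2⟩
        · by_cases hpair2 : ∃ t : ZMod q, d γ = c t ∧ y'' = c (t + 1)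
          · obtain ⟨t, _, h2⟩ := hpair2
            exact ⟨t + 1, h2 ▸ (Relation.ReflTransGen.mono AoutAe _ _ hw1)⟩
          · exfalso
            apply hxS
            apply mem_S_of x
            · refine ⟨d γ, memS γ, ?_⟩
              exact (Relation.ReflTransGen.mono (fun a b h => h.1) _ _ hD'w).head ⟨harc2, hpair2⟩
            · exact ⟨d (m + 1), memS (m + 1), Relation.ReflTransGen.single hxD⟩
        · exact ⟨l, Relation.ReflTransGen.mono AoutAe _ _ hw2⟩
  -- assemble the forbidden walk from d m to d (m+1) avoiding the arc e_m
  obtain ⟨j, hWy⟩ := anchorY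
  obtain ⟨l, hWx⟩ := anchorX
  have W1 : Ae (d m) y := ⟨hy, fun hp => hyS (hp.2 ▸ memS (m + 1))⟩
  have W5 : Ae x (d (m + 1)) := ⟨hx, fun hp => hxS (hp.1 ▸ memS m)⟩
  have W : Relation.ReflTransGen Ae (d m) (d (m + 1)) :=
    ((((Relation.ReflTransGen.single W1).trans hWy).trans (CqWalk j l)).trans hWx).tail W5
  exact NAP (d m) (d (m + 1)) (arcCyc m) W
end

section
/- Let D be a minimal strong digraph (MSD), C_q a directed cycle of length q contained in D, D' the digraph obtained from D by deleting all arcs of C_q, and H the Hasse diagram associated to (D,C_q), obtained from D' by contracting each strong component to a single vertex. Then in H there is no arc whose initial vertex is a minimal vertex of H and whose final vertex is a maximal vertex of H. -/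
section Aux

variable {V : Type*}

lemma mutreach_trans {A : V → V → Prop} {u v w : V} (h1 : MutReach A u v)
    (h2 : MutReach A v w) : MutReach A u w :=
  ⟨h1.1.trans h2.1, h2.2.trans h1.2⟩

lemma mutreach_symm {A : V → V → Prop} {u v : V} (h : MutReach A u v) : MutReach A v u :=
  ⟨h.2, h.1⟩

lemma isSC_eq {A : V → V → Prop} {S T : Set V} (hS : IsSC A S) (hT : IsSC A T) {x : V}
    (hxS : x ∈ S) (hxT : x ∈ T) : S = T := by
  obtain ⟨s, rfl⟩ := hS
  obtain ⟨t, rfl⟩ := hT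
  ext y
  constructor
  · intro hy
    exact mutreach_trans (mutreach_trans hxT (mutreach_symm hxS)) hy
  · intro hy
    exact mutreach_trans (mutreach_trans hxS (mutreach_symm hxT)) hy

lemma cross_in {A : V → V → Prop} {S : Set V} {p u : V}
    (h : Relation.ReflTransGen A p u) (hu : u ∈ S) :
    p ∉ S → ∃ a b, A a b ∧ a ∉ S ∧ b ∈ S := by
  induction h using Relation.ReflTransGen.head_induction_on with
  | refl => exact fun hp => absurd hu hp
  | head hab _ ih =>
    intro hp
    rename_i a b _
    by_cases hbS : b ∈ S
    · exact ⟨a, b, hab, hp, hbS⟩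
    · exact ih hbS

/-- Either a path can avoid the arc `(u,v)`, or `v` reaches the endpoint. -/
lemma avoid_fwd {R : V → V → Prop} (u v : V) {x y : V} (h : Relation.ReflTransGen R x y) :
    Relation.ReflTransGen (fun a b => R a b ∧ ¬(a = u ∧ b = v)) x y ∨
      Relation.ReflTransGen R v y := by
  induction h using Relation.ReflTransGen.head_induction_on with
  | refl => exact Or.inl Relation.ReflTransGen.refl
  | @head a b hab hby ih =>
    rcases ih with ih | ih
    · by_cases hcase : a = u ∧ b = v
      · exact Or.inr (hcase.2 ▸ hby)
      · exact Or.inl (Relation.ReflTransGen.head ⟨hab, hcase⟩ ih)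
    · exact Or.inr ih

/-- Either a path can avoid the arc `(u,v)`, or the start reaches `u`. -/
lemma avoid_bwd {R : V → V → Prop} (u v : V) {x y : V} (h : Relation.ReflTransGen R x y) :
    Relation.ReflTransGen (fun a b => R a b ∧ ¬(a = u ∧ b = v)) x y ∨
      Relation.ReflTransGen R x u := by
  induction h with
  | refl => exact Or.inl Relation.ReflTransGen.refl
  | @tail b y' hxb hby ih =>
    rcases ih with ih | ih
    · by_cases hcase : b = u ∧ y' = v
      · exact Or.inr (hcase.1 ▸ Relation.ReflTransGen.mono (p := R) (fun a b hab => hab.1) _ _ ih)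
      · exact Or.inl (ih.tail ⟨hby, hcase⟩)
    · exact Or.inr ih

lemma cycle_walk {R : V → V → Prop} {q : ℕ} [NeZero q] {c : ZMod q → V}
    (hstep : ∀ i : ZMod q, R (c i) (c (i + 1))) (a b : ZMod q) :
    Relation.ReflTransGen R (c a) (c b) := by
  have key : ∀ n : ℕ, Relation.ReflTransGen R (c a) (c (a + n)) := by
    intro n
    induction n with
    | zero => simpa using Relation.ReflTransGen.refl
    | succ n ih =>
      have := ih.tail (hstep (a + n))
      have hcast : a + ((n : ZMod q) + 1) = a + (n : ZMod q) + 1 := by ring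
      simpa [Nat.cast_succ, hcast] using this
  have hval : a + (((b - a).val : ℕ) : ZMod q) = b := by
    rw [ZMod.natCast_rightInverse (b - a)]; ring
  have := key (b - a).val
  rwa [hval] at this

lemma replace_arc {A : V → V → Prop} {u v : V}
    (hdet : Relation.ReflTransGen (fun a b => A a b ∧ ¬(a = u ∧ b = v)) u v)
    {x y : V} (h : Relation.ReflTransGen A x y) :
    Relation.ReflTransGen (fun a b => A a b ∧ ¬(a = u ∧ b = v)) x y := by
  induction h with
  | refl => exact Relation.ReflTransGen.refl
  | @tail b y' _ hby ih =>
    by_cases hcase : b = u ∧ y' = v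
    · obtain ⟨rfl, rfl⟩ := hcase
      exact ih.trans hdet
    · exact ih.tail ⟨hby, hcase⟩

end Aux

/-- In the Hasse diagram `H` associated to `(D, C_q)`, there is no arc from a
minimal vertex of `H` to a maximal vertex of `H`. -/
theorem stmt7 {V : Type*} [Fintype V] (A : V → V → Prop) (q : ℕ) (c : ZMod q → V)
    (hMSD : IsMSD A) (hc : IsCycleIn A q c) (S T : Set V)
    (hS : IsSC (DelCycle A q c) S) (hT : IsSC (DelCycle A q c) T)
    (hSmin : ¬ ∃ U : Set V, HAdj (DelCycle A q c) U S)
    (hTmax : ¬ ∃ U : Set V, HAdj (DelCycle A q c) T U) :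
    ¬ HAdj (DelCycle A q c) S T := by
  rintro ⟨-, -, hST, u, hu, v, hv, hA⟩
  have hq2 := hc.1
  haveI : NeZero q := ⟨by omega⟩
  set D' := DelCycle A q c with hD'
  obtain ⟨hAuv, hnotcyc⟩ := hA
  have hD'uv : D' u v := ⟨hAuv, hnotcyc⟩
  -- S and T are disjoint
  have hvS : v ∉ S := fun h => hST (isSC_eq hS hT h hv)
  have huT : u ∉ T := fun h => hST (isSC_eq hS hT hu h)
  obtain ⟨s, hSdef⟩ := hS
  obtain ⟨t, hTdef⟩ := hT
  -- a path in A from v to u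
  have hpath : Relation.ReflTransGen A v u := hMSD.1 v u
  -- the cycle enters S : ∃ i with c (i+1) ∈ S
  obtain ⟨a, b, hab, haS, hbS⟩ := cross_in hpath hu hvS
  have hentry : ∃ i : ZMod q, a = c i ∧ b = c (i + 1) := by
    by_contra hcyc
    apply hSmin
    refine ⟨{x | MutReach D' a x}, ⟨a, rfl⟩, ⟨s, hSdef⟩, ?_, a, ?_, b, hbS, ⟨hab, hcyc⟩⟩
    · intro hEq
      exact haS (hEq ▸ (⟨Relation.ReflTransGen.refl, Relation.ReflTransGen.refl⟩ :
        MutReach D' a a))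
    · exact ⟨Relation.ReflTransGen.refl, Relation.ReflTransGen.refl⟩
  obtain ⟨i, -, hbeq⟩ := hentry
  rw [hbeq] at hbS
  -- the cycle leaves T : ∃ j with c j ∈ T
  have huTc : u ∈ Tᶜ := huT
  have hvTc : v ∉ Tᶜ := fun h => h hv
  obtain ⟨a', b', hab', ha'T, hb'T⟩ := cross_in hpath huTc hvTc
  rw [Set.notMem_compl_iff] at ha'T
  have hexit : ∃ j : ZMod q, a' = c j ∧ b' = c (j + 1) := by
    by_contra hcyc
    apply hTmax
    refine ⟨{x | MutReach D' b' x}, ⟨t, hTdef⟩, ⟨b', rfl⟩, ?_, a', ha'T, b', ?_, ⟨hab', hcyc⟩⟩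
    · intro hEq
      exact hb'T (hEq ▸ (⟨Relation.ReflTransGen.refl, Relation.ReflTransGen.refl⟩ :
        MutReach D' b' b'))
    · exact ⟨Relation.ReflTransGen.refl, Relation.ReflTransGen.refl⟩
  obtain ⟨j, ha'eq, -⟩ := hexit
  rw [ha'eq] at ha'T
  -- segment 1 : u → c (i+1) inside S, in D'
  have hmu : MutReach D' s u := by rw [hSdef] at hu; exact hu
  have hmci : MutReach D' s (c (i + 1)) := by rw [hSdef] at hbS; exact hbS
  have seg1 : Relation.ReflTransGen D' u (c (i + 1)) := hmu.2.trans hmci.1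
  -- segment 3 : c j → v inside T, in D'
  have hmcj : MutReach D' t (c j) := by rw [hTdef] at ha'T; exact ha'T
  have hmv : MutReach D' t v := by rw [hTdef] at hv; exact hv
  have seg3 : Relation.ReflTransGen D' (c j) v := hmcj.2.trans hmv.1
  -- restricted relation
  set A' : V → V → Prop := fun x y => A x y ∧ ¬(x = u ∧ y = v) with hA'
  -- segment 1 avoids (u,v)
  have seg1' : Relation.ReflTransGen A' u (c (i + 1)) := by
    rcases avoid_fwd u v seg1 with h | h
    · exact Relation.ReflTransGen.mono (p := A') (fun a b hab => ⟨hab.1.1, hab.2⟩) _ _ h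
    · -- then v ∈ S, contradiction
      exfalso
      apply hvS
      have h1 : Relation.ReflTransGen D' s v :=
        hmu.1.trans (Relation.ReflTransGen.single hD'uv)
      have h2 : Relation.ReflTransGen D' v s := h.trans hmci.2
      exact hSdef ▸ (⟨h1, h2⟩ : MutReach D' s v)
  -- segment 3 avoids (u,v)
  have seg3' : Relation.ReflTransGen A' (c j) v := by
    rcases avoid_bwd u v seg3 with h | h
    · exact Relation.ReflTransGen.mono (p := A') (fun a b hab => ⟨hab.1.1, hab.2⟩) _ _ h
    · -- then u ∈ T, contradiction
      exfalso
      apply huT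
      have h1 : Relation.ReflTransGen D' t u := hmcj.1.trans h
      have h2 : Relation.ReflTransGen D' u t :=
        (Relation.ReflTransGen.single hD'uv).trans hmv.2
      exact hTdef ▸ (⟨h1, h2⟩ : MutReach D' t u)
  -- segment 2 : along the cycle
  have seg2 : Relation.ReflTransGen A' (c (i + 1)) (c j) := by
    apply cycle_walk
    intro k
    exact ⟨hc.2.2 k, fun hk => hnotcyc ⟨k, hk.1.symm, hk.2.symm⟩⟩
  -- the detour
  have hdet : Relation.ReflTransGen A' u v := (seg1'.trans seg2).trans seg3'
  -- contradiction with minimality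
  exact hMSD.2 u v hAuv fun x y => replace_arc hdet (hMSD.1 x y)
end

section
/- Let D be a minimal strong digraph (MSD), C_q a directed cycle of length q contained in D, D' the digraph obtained from D by deleting all arcs of C_q, and H the Hasse diagram associated to (D,C_q), obtained from D' by contracting each strong component to a single vertex. If u and v are vertices of H joined by an arc uv of H, then the strong components of D' corresponding to u and to v cannot both contain vertices of C_q. -/
/-!
Let `u → v` be an arc of `D'` from the strong component `S` to the strong component `T`, and
suppose `c i ∈ S` and `c j ∈ T`. Since `v ∉ S` and `u ∉ T`, paths of `D'` inside `S` and `T` never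
use the arc `u → v`, and neither does the cycle, because `u → v` is not an arc of `C_q`. Hence
`u ⇝ c i ⇝ c j ⇝ v` is a detour in `D` avoiding `u → v`, so the arc is redundant, contradicting
minimality of `D`.
-/

def DeleteArc {V : Type*} (A : V → V → Prop) (a b : V) : V → V → Prop :=
  fun x y => A x y ∧ ¬(x = a ∧ y = b)

theorem reflTransGen_deleteArc_of_reflTransGen {V : Type*} {A : V → V → Prop} {a b x y : V}
    (hab : Relation.ReflTransGen (DeleteArc A a b) a b) (hxy : Relation.ReflTransGen A x y) :
    Relation.ReflTransGen (DeleteArc A a b) x y := by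
  induction hxy with
  | refl => rfl
  | @tail z w _ hzw ih =>
    by_cases h : z = a ∧ w = b
    · obtain ⟨rfl, rfl⟩ := h
      exact ih.trans hab
    · exact ih.tail ⟨hzw, h⟩

theorem IsMSD.not_reflTransGen_deleteArc {V : Type*} {A : V → V → Prop} (hA : IsMSD A)
    {a b : V} (hab : A a b) : ¬ Relation.ReflTransGen (DeleteArc A a b) a b :=
  fun h => hA.2 a b hab fun x y => reflTransGen_deleteArc_of_reflTransGen h (hA.1 x y)

namespace IsSC

variable {V : Type*} {A : V → V → Prop} {S T : Set V}

theorem notMem_of_ne (hS : IsSC A S) (hT : IsSC A T) (hST : S ≠ T) {x : V} (hxS : x ∈ S) :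
    x ∉ T := by
  obtain ⟨s, rfl⟩ := hS
  obtain ⟨t, rfl⟩ := hT
  intro hxT
  have hst : MutReach A s t := ⟨hxS.1.trans hxT.2, hxT.1.trans hxS.2⟩
  exact hST <| Set.ext fun y =>
    ⟨fun hy => ⟨hst.2.trans hy.1, hy.2.trans hst.1⟩,
     fun hy => ⟨hst.1.trans hy.1, hy.2.trans hst.2⟩⟩

theorem reflTransGen_induce (hS : IsSC A S) {x y : V} (hx : x ∈ S) (hy : y ∈ S) :
    Relation.ReflTransGen (fun a b => A a b ∧ a ∈ S ∧ b ∈ S) x y := by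
  obtain ⟨s, rfl⟩ := hS
  have hxy : Relation.ReflTransGen A x y := hx.2.trans hy.1
  induction hxy using Relation.ReflTransGen.head_induction_on with
  | refl => rfl
  | @head a b hab hby ih =>
    have hb : MutReach A s b := ⟨hx.1.tail hab, hby.trans hy.2⟩
    exact .head ⟨hab, hx, hb⟩ (ih hb)

end IsSC

theorem reflTransGen_cycleArcs {V : Type*} {q : ℕ} [NeZero q] (c : ZMod q → V) (i j : ZMod q) :
    Relation.ReflTransGen (fun x y => ∃ k, x = c k ∧ y = c (k + 1)) (c i) (c j) := by
  have step : ∀ n : ℕ, Relation.ReflTransGen (fun x y => ∃ k, x = c k ∧ y = c (k + 1))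
      (c i) (c (i + n)) := by
    intro n
    induction n with
    | zero => rw [Nat.cast_zero, add_zero]
    | succ n ih =>
      refine ih.tail ⟨i + n, rfl, ?_⟩
      push_cast
      rw [add_assoc]
  simpa using step (j - i).val

theorem stmt8_general {V : Type*} (A : V → V → Prop) (q : ℕ) (c : ZMod q → V)
    (hMSD : IsMSD A) (hc : IsCycleIn A q c) (S T : Set V)
    (hST : HAdj (DelCycle A q c) S T) :
    ¬((∃ i : ZMod q, c i ∈ S) ∧ (∃ j : ZMod q, c j ∈ T)) := by
  rintro ⟨⟨i, hiS⟩, ⟨j, hjT⟩⟩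
  obtain ⟨hS, hT, hST, u, huS, v, hvT, huv, huv_not_cycle⟩ := hST
  have : NeZero q := ⟨by have := hc.1; omega⟩
  have hvS : v ∉ S := hT.notMem_of_ne hS hST.symm hvT
  have huT : u ∉ T := hS.notMem_of_ne hT hST huS
  have path_S : Relation.ReflTransGen (DeleteArc A u v) u (c i) :=
    Relation.ReflTransGen.mono (fun _ _ ⟨h, _, hb⟩ => ⟨h.1, fun ⟨_, hbv⟩ => hvS (hbv ▸ hb)⟩) _ _
      (hS.reflTransGen_induce huS hiS)
  have path_cycle : Relation.ReflTransGen (DeleteArc A u v) (c i) (c j) :=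
    Relation.ReflTransGen.mono
      (fun _ _ ⟨k, hx, hy⟩ =>
        ⟨hx ▸ hy ▸ hc.2.2 k, fun ⟨hxu, hyv⟩ => huv_not_cycle ⟨k, hxu ▸ hx, hyv ▸ hy⟩⟩) _ _
      (reflTransGen_cycleArcs c i j)
  have path_T : Relation.ReflTransGen (DeleteArc A u v) (c j) v :=
    Relation.ReflTransGen.mono (fun _ _ ⟨h, ha, _⟩ => ⟨h.1, fun ⟨hau, _⟩ => huT (hau ▸ ha)⟩) _ _
      (hT.reflTransGen_induce hjT hvT)
  exact hMSD.not_reflTransGen_deleteArc huv ((path_S.trans path_cycle).trans path_T)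

/-- If `S → T` is an arc of the Hasse diagram associated to `(D, C_q)`, then
`S` and `T` cannot both contain vertices of `C_q`. -/
theorem stmt8 {V : Type*} [Fintype V] (A : V → V → Prop) (q : ℕ) (c : ZMod q → V)
    (hMSD : IsMSD A) (hc : IsCycleIn A q c) (S T : Set V)
    (hST : HAdj (DelCycle A q c) S T) :
    ¬((∃ i : ZMod q, c i ∈ S) ∧ (∃ j : ZMod q, c j ∈ T)) :=
  stmt8_general A q c hMSD hc S T hST
end

section
/- Let D be a minimal strong digraph (MSD), C_q a directed cycle of length q contained in D, D' the digraph obtained from D by deleting all arcs of C_q, and H the Hasse diagram associated to (D,C_q), obtained from D' by contracting each strong component to a single vertex. Then every directed path in H from a minimal vertex of H to a maximal vertex of H contains at least one vertex that is linear in H; moreover, this linear vertex is neither the first nor the last vertex of the path. -/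
section SCBasics

open Relation

variable {V : Type*} {B : V → V → Prop}

namespace Stmt9Aux

theorem mut_refl (v : V) : MutReach B v v := ⟨.refl, .refl⟩

theorem mut_symm {a b : V} (h : MutReach B a b) : MutReach B b a := ⟨h.2, h.1⟩

theorem mut_trans {a b d : V} (h1 : MutReach B a b) (h2 : MutReach B b d) :
    MutReach B a d := ⟨h1.1.trans h2.1, h2.2.trans h1.2⟩

/-- Strong component of a vertex. -/
def SComp (B : V → V → Prop) (v : V) : Set V := {u | MutReach B v u}

theorem mem_SComp_self (v : V) : v ∈ SComp B v := mut_refl v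

theorem isSC_SComp (v : V) : IsSC B (SComp B v) := ⟨v, rfl⟩

theorem SComp_eq_of_mut {a b : V} (h : MutReach B a b) : SComp B a = SComp B b := by
  ext x
  exact ⟨fun hx => mut_trans (mut_symm h) hx, fun hx => mut_trans h hx⟩

theorem eq_SComp_of_mem {S : Set V} (hS : IsSC B S) {v : V} (hv : v ∈ S) :
    S = SComp B v := by
  obtain ⟨w, rfl⟩ := hS
  exact SComp_eq_of_mut hv

theorem sc_mutReach {S : Set V} (hS : IsSC B S) {a b : V} (ha : a ∈ S) (hb : b ∈ S) :
    MutReach B a b := by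
  obtain ⟨w, rfl⟩ := hS
  exact mut_trans (mut_symm ha) hb

theorem sc_disjoint {S T : Set V} (hS : IsSC B S) (hT : IsSC B T) {a : V}
    (haS : a ∈ S) (haT : a ∈ T) : S = T := by
  rw [eq_SComp_of_mem hS haS, eq_SComp_of_mem hT haT]

theorem sc_nonempty {S : Set V} (hS : IsSC B S) : ∃ v, v ∈ S := by
  obtain ⟨w, rfl⟩ := hS
  exact ⟨w, mem_SComp_self w⟩

/-- Reachability along a path of `HAdj` steps. -/
theorem hadj_down {S T : Set V} (h : ReflTransGen (HAdj B) S T) (hS : IsSC B S)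
    {s t : V} (hs : s ∈ S) (ht : t ∈ T) : ReflTransGen B s t := by
  induction h using ReflTransGen.head_induction_on generalizing s with
  | refl => exact (sc_mutReach hS hs ht).1
  | head h' _ ih =>
    obtain ⟨hX, hZ, _, u, huX, v, hvZ, huv⟩ := h'
    exact ((sc_mutReach hS hs huX).1.tail huv).trans (ih hZ hvZ)

/-- The condensation is acyclic. -/
theorem hadj_irrefl {S : Set V} (h : TransGen (HAdj B) S S) : False := by
  obtain ⟨Z, h1, h2⟩ := (Relation.TransGen.head'_iff).mp h
  obtain ⟨hS, hZ, hne, u, huS, v, hvZ, huv⟩ := h1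
  have hvu : ReflTransGen B v u := hadj_down h2 hZ hvZ huS
  have : MutReach B u v := ⟨ReflTransGen.single huv, hvu⟩
  refine hne (sc_disjoint hS hZ huS (a := u) ?_)
  rw [eq_SComp_of_mem hZ hvZ]
  exact mut_symm this

end Stmt9Aux
end SCBasics
section Rank

open Relation

namespace Stmt9Aux

variable {V : Type*} [Fintype V] {B : V → V → Prop}

/-- Rank of a strong component in the condensation order. -/
noncomputable def hrank (B : V → V → Prop) (S : Set V) : ℕ :=
  {T : Set V | TransGen (HAdj B) T S}.ncard

theorem hrank_lt {S T : Set V} (h : TransGen (HAdj B) S T) : hrank B S < hrank B T := by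
  have hsub : {Z : Set V | TransGen (HAdj B) Z S} ⊂ {Z : Set V | TransGen (HAdj B) Z T} := by
    constructor
    · intro Z hZ
      exact hZ.trans h
    · intro hsub'
      have hST : S ∈ {Z : Set V | TransGen (HAdj B) Z T} := h
      exact (fun hh => hadj_irrefl hh) (hsub' hST)
  exact Set.ncard_lt_ncard hsub (Set.toFinite _)

theorem exists_hadj_max (U : Set (Set V)) (hne : U.Nonempty) :
    ∃ X ∈ U, ∀ Z ∈ U, ¬ HAdj B X Z := by
  obtain ⟨X, hX, hmax⟩ := Set.exists_max_image U (hrank B) (Set.toFinite _) hne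
  refine ⟨X, hX, fun Z hZ h => ?_⟩
  exact absurd (hmax Z hZ) (Nat.not_le.mpr (hrank_lt (TransGen.single h)))

theorem exists_hadj_min (U : Set (Set V)) (hne : U.Nonempty) :
    ∃ X ∈ U, ∀ Z ∈ U, ¬ HAdj B Z X := by
  obtain ⟨X, hX, hmin⟩ := Set.exists_min_image U (hrank B) (Set.toFinite _) hne
  refine ⟨X, hX, fun Z hZ h => ?_⟩
  exact absurd (hmin Z hZ) (Nat.not_le.mpr (hrank_lt (TransGen.single h)))

end Stmt9Aux
end Rank
section Core

open Relation

namespace Stmt9Aux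

variable {V : Type*} {A : V → V → Prop} {q : ℕ} {c : ZMod q → V}

/-- Condensation-level adjacency using arcs of the full digraph `A`. -/
def GAdj (A : V → V → Prop) (q : ℕ) (c : ZMod q → V) (S T : Set V) : Prop :=
  IsSC (DelCycle A q c) S ∧ IsSC (DelCycle A q c) T ∧ S ≠ T ∧
    ∃ u ∈ S, ∃ w ∈ T, A u w

/-- Condensation-level adjacency coming from an arc of the cycle. -/
def WAdj (A : V → V → Prop) (q : ℕ) (c : ZMod q → V) (S T : Set V) : Prop :=
  IsSC (DelCycle A q c) S ∧ IsSC (DelCycle A q c) T ∧ S ≠ T ∧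
    ∃ i : ZMod q, c i ∈ S ∧ c (i + 1) ∈ T

/-- A strong component meets the cycle. -/
def OnW (q : ℕ) (c : ZMod q → V) (S : Set V) : Prop := ∃ i : ZMod q, c i ∈ S

theorem del_sub : ∀ {x y : V}, DelCycle A q c x y → A x y := fun h => h.1

theorem hadj_gadj {S T : Set V} (h : HAdj (DelCycle A q c) S T) : GAdj A q c S T := by
  obtain ⟨h1, h2, h3, u, hu, v, hv, huv⟩ := h
  exact ⟨h1, h2, h3, u, hu, v, hv, huv.1⟩

theorem gadj_resolve {S T : Set V} (h : GAdj A q c S T) :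
    HAdj (DelCycle A q c) S T ∨ ∃ i : ZMod q, c i ∈ S ∧ c (i + 1) ∈ T := by
  obtain ⟨h1, h2, h3, u, hu, v, hv, huv⟩ := h
  by_cases hd : DelCycle A q c u v
  · exact Or.inl ⟨h1, h2, h3, u, hu, v, hv, hd⟩
  · right
    rw [DelCycle, not_and, not_not] at hd
    obtain ⟨i, rfl, rfl⟩ := hd huv
    exact ⟨i, hu, hv⟩

theorem wadj_gadj (hc : IsCycleIn A q c) {S T : Set V} (h : WAdj A q c S T) :
    GAdj A q c S T := by
  obtain ⟨h1, h2, h3, i, hi, hi1⟩ := h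
  exact ⟨h1, h2, h3, c i, hi, c (i + 1), hi1, hc.2.2 i⟩

/-- Inside a strong component of `D'` one can move around avoiding a prescribed
arc `(u,v)` whose endpoints are not mutually reachable in `D'`. -/
theorem intra_reach {u v : V} (huv : ¬ MutReach (DelCycle A q c) u v) {a b : V}
    (hab : MutReach (DelCycle A q c) a b) :
    ReflTransGen (fun x y => A x y ∧ ¬(x = u ∧ y = v)) a b := by
  obtain ⟨h1, h2⟩ := hab
  induction h1 using ReflTransGen.head_induction_on with
  | refl => exact .refl
  | @head a z harc hzb ih =>
    have hba : ReflTransGen (DelCycle A q c) b a := h2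
    have hbz : ReflTransGen (DelCycle A q c) b z := hba.tail harc
    refine ReflTransGen.head ⟨harc.1, ?_⟩ (ih hbz)
    rintro ⟨rfl, rfl⟩
    exact huv ⟨ReflTransGen.single harc, hzb.trans hba⟩

/-- If the deleted arc can be bypassed, the remaining digraph is still strong. -/
theorem bypass_strong {u v : V} (h1 : StronglyConnected A)
    (h2 : ReflTransGen (fun x y => A x y ∧ ¬(x = u ∧ y = v)) u v) :
    StronglyConnected (fun x y => A x y ∧ ¬(x = u ∧ y = v)) := by
  intro x y
  induction h1 x y with
  | refl => exact .refl
  | @tail b d hxb harc ih =>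
    by_cases hcase : b = u ∧ d = v
    · obtain ⟨rfl, rfl⟩ := hcase
      exact ih.trans h2
    · exact ih.tail ⟨harc, hcase⟩

end Stmt9Aux
end Core
section Core2

open Relation

namespace Stmt9Aux

variable {V : Type*} {A : V → V → Prop} {q : ℕ} {c : ZMod q → V}

theorem not_mut_of_sc_ne {S T : Set V} (hS : IsSC (DelCycle A q c) S)
    (hT : IsSC (DelCycle A q c) T) (hne : S ≠ T) {u v : V} (hu : u ∈ S) (hv : v ∈ T) :
    ¬ MutReach (DelCycle A q c) u v := by
  intro h
  apply hne
  rw [eq_SComp_of_mem hS hu, eq_SComp_of_mem hT hv]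
  exact SComp_eq_of_mut h

/-- Minimality at the level of the condensation: no arc of the condensation
(together with the cycle arcs) can be bypassed. -/
theorem no_bypass (hMSD : IsMSD A) {S T : Set V} (hG : GAdj A q c S T) :
    ¬ ReflTransGen (fun X Y => GAdj A q c X Y ∧ ¬(X = S ∧ Y = T)) S T := by
  intro hpath
  obtain ⟨hS, hT, hne, u, huS, v, hvT, hA⟩ := hG
  have huv : ¬ MutReach (DelCycle A q c) u v := not_mut_of_sc_ne hS hT hne huS hvT
  have key : ∀ X (_ : ReflTransGen (fun X Y => GAdj A q c X Y ∧ ¬(X = S ∧ Y = T)) X T),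
      IsSC (DelCycle A q c) X → ∀ a ∈ X,
      ReflTransGen (fun x y => A x y ∧ ¬(x = u ∧ y = v)) a v := by
    intro X hXT
    induction hXT using ReflTransGen.head_induction_on with
    | refl =>
      intro hX a ha
      exact intra_reach huv (sc_mutReach hX ha hvT)
    | @head X Z hstep hZT ih =>
      intro hX a ha
      obtain ⟨⟨hX', hZ', hne', p, hpX, r, hrZ, hpr⟩, hnotST⟩ := hstep
      have h1 : ReflTransGen (fun x y => A x y ∧ ¬(x = u ∧ y = v)) a p :=
        intra_reach huv (sc_mutReach hX ha hpX)
      have h2 : (fun x y => A x y ∧ ¬(x = u ∧ y = v)) p r := by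
        refine ⟨hpr, ?_⟩
        rintro ⟨rfl, rfl⟩
        exact hnotST ⟨sc_disjoint hX' hS hpX huS, sc_disjoint hZ' hT hrZ hvT⟩
      exact (h1.tail h2).trans (ih hZ' r hrZ)
  exact hMSD.2 u v hA (bypass_strong hMSD.1 (key S hpath hS u huS))

/-- Between two distinct strong components joined by an `H`-arc there is no
cycle arc. -/
theorem no_double (hMSD : IsMSD A) (hc : IsCycleIn A q c) {S T : Set V}
    (hH : HAdj (DelCycle A q c) S T) {i : ZMod q} (hi : c i ∈ S) (hi1 : c (i + 1) ∈ T) :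
    False := by
  obtain ⟨hS, hT, hne, u, huS, v, hvT, huv⟩ := hH
  have hmut : ¬ MutReach (DelCycle A q c) u v := not_mut_of_sc_ne hS hT hne huS hvT
  have h1 : ReflTransGen (fun x y => A x y ∧ ¬(x = u ∧ y = v)) u (c i) :=
    intra_reach hmut (sc_mutReach hS huS hi)
  have h2 : (fun x y => A x y ∧ ¬(x = u ∧ y = v)) (c i) (c (i + 1)) := by
    refine ⟨hc.2.2 i, ?_⟩
    rintro ⟨rfl, rfl⟩
    exact huv.2 ⟨i, rfl, rfl⟩
  have h3 : ReflTransGen (fun x y => A x y ∧ ¬(x = u ∧ y = v)) (c (i + 1)) v :=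
    intra_reach hmut (sc_mutReach hT hi1 hvT)
  exact hMSD.2 u v huv.1 (bypass_strong hMSD.1 ((h1.tail h2).trans h3))

/-- Projection of reachability in `A` to the condensation. -/
theorem comp_reach {x y : V} (h : ReflTransGen A x y) :
    ReflTransGen (GAdj A q c) (SComp (DelCycle A q c) x) (SComp (DelCycle A q c) y) := by
  induction h with
  | refl => exact .refl
  | @tail b d _ harc ih =>
    by_cases hbd : SComp (DelCycle A q c) b = SComp (DelCycle A q c) d
    · rwa [hbd] at ih
    · exact ih.tail ⟨isSC_SComp b, isSC_SComp d, hbd, b, mem_SComp_self b, d,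
        mem_SComp_self d, harc⟩

/-- The condensation (with cycle arcs) is strongly connected. -/
theorem g_strong (hMSD : IsMSD A) {S T : Set V} (hS : IsSC (DelCycle A q c) S)
    (hT : IsSC (DelCycle A q c) T) : ReflTransGen (GAdj A q c) S T := by
  obtain ⟨s, hs⟩ := sc_nonempty hS
  obtain ⟨t, ht⟩ := sc_nonempty hT
  have := comp_reach (A := A) (q := q) (c := c) (hMSD.1 s t)
  rwa [← eq_SComp_of_mem hS hs, ← eq_SComp_of_mem hT ht] at this

theorem w_walk (i : ZMod q) (n : ℕ) :
    ReflTransGen (WAdj A q c) (SComp (DelCycle A q c) (c i))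
      (SComp (DelCycle A q c) (c (i + n))) := by
  induction n with
  | zero =>
    simp only [Nat.cast_zero, add_zero]
    exact .refl
  | succ n ih =>
    have hcast : i + ((n + 1 : ℕ) : ZMod q) = (i + (n : ZMod q)) + 1 := by push_cast; ring
    rw [hcast]
    by_cases hsame : SComp (DelCycle A q c) (c (i + (n : ZMod q)))
        = SComp (DelCycle A q c) (c ((i + (n : ZMod q)) + 1))
    · rw [← hsame]; exact ih
    · exact ih.tail ⟨isSC_SComp _, isSC_SComp _, hsame, i + (n : ZMod q),
        mem_SComp_self _, mem_SComp_self _⟩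

/-- The components meeting the cycle are mutually reachable through cycle arcs. -/
theorem w_reach (hq : 2 ≤ q) {S T : Set V} (hS : IsSC (DelCycle A q c) S)
    (hT : IsSC (DelCycle A q c) T) {i j : ZMod q} (hi : c i ∈ S) (hj : c j ∈ T) :
    ReflTransGen (WAdj A q c) S T := by
  haveI : NeZero q := ⟨by omega⟩
  have h := w_walk (A := A) (c := c) i (j - i).val
  rw [ZMod.natCast_rightInverse (j - i)] at h
  have hji : i + (j - i) = j := by ring
  rw [hji] at h
  rwa [← eq_SComp_of_mem hS hi, ← eq_SComp_of_mem hT hj] at h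

end Stmt9Aux
end Core2
section Big

open Relation

namespace Stmt9Aux

variable {V : Type*} [Fintype V] {A : V → V → Prop} {q : ℕ} {c : ZMod q → V}

/-- A `WAdj`-path may be viewed as a `GAdj`-path avoiding a given `H`-arc. -/
theorem w_to_g' (hMSD : IsMSD A) (hc : IsCycleIn A q c) {S T : Set V}
    (hST : HAdj (DelCycle A q c) S T) {X Y : Set V}
    (h : ReflTransGen (WAdj A q c) X Y) :
    ReflTransGen (fun X Y => GAdj A q c X Y ∧ ¬(X = S ∧ Y = T)) X Y := by
  refine ReflTransGen.mono ?_ _ _ h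
  intro a b hab
  refine ⟨wadj_gadj hc hab, ?_⟩
  rintro ⟨rfl, rfl⟩
  obtain ⟨_, _, _, i, hi, hi1⟩ := hab
  exact no_double hMSD hc hST hi hi1

/-- No `H`-arc can join two components both meeting the cycle. -/
theorem hadj_onW_false (hMSD : IsMSD A) (hc : IsCycleIn A q c) {S T : Set V}
    (hST : HAdj (DelCycle A q c) S T) (hS : OnW q c S) (hT : OnW q c T) : False := by
  obtain ⟨i, hi⟩ := hS
  obtain ⟨j, hj⟩ := hT
  exact no_bypass hMSD (hadj_gadj hST)
    (w_to_g' hMSD hc hST (w_reach hc.1 hST.1 hST.2.1 hi hj))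

theorem sc_of_reach' {S T Z : Set V} (hZ : IsSC (DelCycle A q c) Z)
    (h : ReflTransGen (fun X Y => GAdj A q c X Y ∧ ¬(X = S ∧ Y = T)) Z X) :
    IsSC (DelCycle A q c) X := by
  rcases h.cases_tail with rfl | ⟨W, _, hWX⟩
  · exact hZ
  · exact hWX.1.2.1

/-- If `S → T` is an `H`-arc and `S` meets the cycle, then `T`'s only in-neighbour
in the extended condensation is `S`. -/
theorem in_unique (hMSD : IsMSD A) (hc : IsCycleIn A q c) {S T : Set V}
    (hST : HAdj (DelCycle A q c) S T) (hSw : OnW q c S) :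
    ∀ Z, GAdj A q c Z T → Z = S := by
  classical
  set G' := fun X Y => GAdj A q c X Y ∧ ¬(X = S ∧ Y = T) with hG'def
  set U : Set (Set V) := {X | IsSC (DelCycle A q c) X ∧
    ¬ ∃ Y, OnW q c Y ∧ IsSC (DelCycle A q c) Y ∧ ReflTransGen G' Y X} with hUdef
  obtain ⟨i, hi⟩ := hSw
  have hTU : T ∈ U := by
    refine ⟨hST.2.1, ?_⟩
    rintro ⟨Y, ⟨j, hj⟩, hYsc, hreach⟩
    exact no_bypass hMSD (hadj_gadj hST)
      ((w_to_g' hMSD hc hST (w_reach hc.1 hST.1 hYsc hi hj)).trans hreach)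
  obtain ⟨X, hXU, hXmin⟩ := exists_hadj_min U ⟨T, hTU⟩
  have claim : ∀ Z, GAdj A q c Z X → Z = S ∧ X = T := by
    intro Z hZX
    by_cases hpair : Z = S ∧ X = T
    · exact hpair
    exfalso
    have hG' : G' Z X := ⟨hZX, hpair⟩
    by_cases hZU : Z ∈ U
    · rcases gadj_resolve hZX with hh | ⟨j, hj, hj1⟩
      · exact hXmin Z hZU hh
      · exact hXU.2 ⟨X, ⟨j + 1, hj1⟩, hXU.1, .refl⟩
    · have hZsc : IsSC (DelCycle A q c) Z := hZX.1
      rw [hUdef] at hZU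
      simp only [Set.mem_setOf_eq, not_and, not_not] at hZU
      obtain ⟨Y, hYw, hYsc, hreach⟩ := hZU hZsc
      exact hXU.2 ⟨Y, hYw, hYsc, hreach.tail hG'⟩
  have hXneS : X ≠ S := by
    rintro rfl
    exact hXU.2 ⟨X, ⟨i, hi⟩, hXU.1, .refl⟩
  rcases (g_strong hMSD hST.1 hXU.1).cases_tail with heq | ⟨Z1, _, hZ1X⟩
  · exact absurd heq hXneS
  · have hXT : X = T := (claim Z1 hZ1X).2
    subst hXT
    exact fun Z h => (claim Z h).1

/-- If `S → T` is an `H`-arc and `T` meets the cycle, then `S`'s only out-neighbour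
in the extended condensation is `T`. -/
theorem out_unique (hMSD : IsMSD A) (hc : IsCycleIn A q c) {S T : Set V}
    (hST : HAdj (DelCycle A q c) S T) (hTw : OnW q c T) :
    ∀ Z, GAdj A q c S Z → Z = T := by
  classical
  set G' := fun X Y => GAdj A q c X Y ∧ ¬(X = S ∧ Y = T) with hG'def
  set U : Set (Set V) := {X | IsSC (DelCycle A q c) X ∧
    ¬ ∃ Y, OnW q c Y ∧ IsSC (DelCycle A q c) Y ∧ ReflTransGen G' X Y} with hUdef
  obtain ⟨i, hi⟩ := hTw
  have hSU : S ∈ U := by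
    refine ⟨hST.1, ?_⟩
    rintro ⟨Y, ⟨j, hj⟩, hYsc, hreach⟩
    exact no_bypass hMSD (hadj_gadj hST)
      (hreach.trans (w_to_g' hMSD hc hST (w_reach hc.1 hYsc hST.2.1 hj hi)))
  obtain ⟨X, hXU, hXmax⟩ := exists_hadj_max U ⟨S, hSU⟩
  have claim : ∀ Z, GAdj A q c X Z → X = S ∧ Z = T := by
    intro Z hXZ
    by_cases hpair : X = S ∧ Z = T
    · exact hpair
    exfalso
    have hG' : G' X Z := ⟨hXZ, hpair⟩
    by_cases hZU : Z ∈ U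
    · rcases gadj_resolve hXZ with hh | ⟨j, hj, hj1⟩
      · exact hXmax Z hZU hh
      · exact hXU.2 ⟨X, ⟨j, hj⟩, hXU.1, .refl⟩
    · have hZsc : IsSC (DelCycle A q c) Z := hXZ.2.1
      rw [hUdef] at hZU
      simp only [Set.mem_setOf_eq, not_and, not_not] at hZU
      obtain ⟨Y, hYw, hYsc, hreach⟩ := hZU hZsc
      exact hXU.2 ⟨Y, hYw, hYsc, hreach.head hG'⟩
  have hXneT : X ≠ T := by
    rintro rfl
    exact hXU.2 ⟨X, ⟨i, hi⟩, hXU.1, .refl⟩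
  rcases (g_strong hMSD hXU.1 hST.2.1).cases_head with heq | ⟨Z1, hXZ1, _⟩
  · exact absurd heq hXneT
  · have hXS : X = S := (claim Z1 hXZ1).1
    subst hXS
    exact fun Z h => (claim Z h).2

end Stmt9Aux
end Big
section Step

open Relation

namespace Stmt9Aux

variable {V : Type*} [Fintype V] {A : V → V → Prop} {q : ℕ} {c : ZMod q → V}

/-- Propagation step: if every extended in-neighbour of `Q` is `P`, and `Q` is not
linear in `H`, then every extended in-neighbour of `R` is `Q`. -/
theorem step_unique (hMSD : IsMSD A) (hc : IsCycleIn A q c) {P Q R : Set V}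
    (hPQ : HAdj (DelCycle A q c) P Q) (hQR : HAdj (DelCycle A q c) Q R)
    (hin : ∀ Z, GAdj A q c Z Q → Z = P) (hnl : ¬ HLinear (DelCycle A q c) Q)
    (hK : ∃ K, IsSC (DelCycle A q c) K ∧ OnW q c K) :
    ∀ Z, GAdj A q c Z R → Z = Q := by
  classical
  -- `Q` has indegree 1 in `H`
  have hindeg : HIndeg (DelCycle A q c) Q = 1 := by
    have : {T : Set V | HAdj (DelCycle A q c) T Q} = {P} := by
      ext Z
      simp only [Set.mem_setOf_eq, Set.mem_singleton_iff]
      exact ⟨fun h => hin Z (hadj_gadj h), fun h => h ▸ hPQ⟩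
    rw [HIndeg, this, Set.ncard_singleton]
  -- hence it has an extra out-neighbour
  obtain ⟨y, hQy, hyR⟩ : ∃ y, HAdj (DelCycle A q c) Q y ∧ y ≠ R := by
    by_contra hcon
    push_neg at hcon
    apply hnl
    refine ⟨hindeg, ?_⟩
    have : {T : Set V | HAdj (DelCycle A q c) Q T} = {R} := by
      ext Z
      simp only [Set.mem_setOf_eq, Set.mem_singleton_iff]
      exact ⟨fun h => hcon Z h, fun h => h ▸ hQR⟩
    rw [HOutdeg, this, Set.ncard_singleton]
  set G' := fun X Y => GAdj A q c X Y ∧ ¬(X = Q ∧ Y = R) with hG'def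
  by_cases hcase : ∃ X, ReflTransGen G' Q X ∧ OnW q c X
  -- Case (i): the region reachable from `Q` avoiding the arc `(Q,R)` meets the cycle
  · obtain ⟨X₀, hX₀r, hX₀w⟩ := hcase
    have hX₀sc : IsSC (DelCycle A q c) X₀ := sc_of_reach' hQR.1 hX₀r
    set U : Set (Set V) := {X | IsSC (DelCycle A q c) X ∧ ¬ ReflTransGen G' Q X} with hUdef
    have hRU : R ∈ U := ⟨hQR.2.1, no_bypass hMSD (hadj_gadj hQR)⟩
    obtain ⟨X, hXU, hXmin⟩ := exists_hadj_min U ⟨R, hRU⟩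
    have claim : ∀ Z, GAdj A q c Z X → Z = Q ∧ X = R := by
      intro Z hZX
      by_cases hpair : Z = Q ∧ X = R
      · exact hpair
      exfalso
      have hG' : G' Z X := ⟨hZX, hpair⟩
      by_cases hZU : Z ∈ U
      · rcases gadj_resolve hZX with hh | ⟨j, hj, hj1⟩
        · exact hXmin Z hZU hh
        · -- `X` meets the cycle, hence is reachable from `X₀` through cycle arcs
          obtain ⟨i₀, hi₀⟩ := hX₀w
          exact hXU.2 (hX₀r.trans
            (w_to_g' hMSD hc hQR (w_reach hc.1 hX₀sc hXU.1 hi₀ hj1)))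
      · have hZsc : IsSC (DelCycle A q c) Z := hZX.1
        rw [hUdef] at hZU
        simp only [Set.mem_setOf_eq, not_and, not_not] at hZU
        exact hXU.2 ((hZU hZsc).tail hG')
    have hXneQ : X ≠ Q := by
      rintro rfl
      exact hXU.2 .refl
    rcases (g_strong hMSD hQR.1 hXU.1).cases_tail with heq | ⟨Z1, _, hZ1X⟩
    · exact absurd heq hXneQ
    · have hXR : X = R := (claim Z1 hZ1X).2
      subst hXR
      exact fun Z h => (claim Z h).1
  -- Case (ii): that region misses the cycle entirely; contradiction
  · exfalso
    push_neg at hcase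
    set Y : Set (Set V) := {X | IsSC (DelCycle A q c) X ∧ ReflTransGen G' Q X} with hYdef
    obtain ⟨X, hXY, hXmax⟩ := exists_hadj_max Y ⟨Q, hQR.1, .refl⟩
    obtain ⟨K, hKsc, hKw⟩ := hK
    have hXw : ¬ OnW q c X := hcase X hXY.2
    have hXneK : X ≠ K := by
      rintro rfl
      exact hXw hKw
    have claim2 : ∀ Z, GAdj A q c X Z → X = Q ∧ Z = R := by
      intro Z hXZ
      by_cases hpair : X = Q ∧ Z = R
      · exact hpair
      exfalso
      rcases gadj_resolve hXZ with hh | ⟨j, hj, hj1⟩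
      · exact hXmax Z ⟨hXZ.2.1, hXY.2.tail ⟨hXZ, hpair⟩⟩ hh
      · exact hXw ⟨j, hj⟩
    rcases (g_strong hMSD hXY.1 hKsc).cases_head with heq | ⟨Z1, hXZ1, _⟩
    · exact hXneK heq
    · have hXQ : X = Q := (claim2 Z1 hXZ1).1
      subst hXQ
      exact hyR (claim2 y (hadj_gadj hQy)).2

end Stmt9Aux
end Step

open Relation Stmt9Aux in
/-- Every directed path in the Hasse diagram `H` from a minimal vertex to a
maximal vertex contains a vertex linear in `H`, which is neither the first nor the last
vertex of the path. -/
theorem stmt9 {V : Type*} [Fintype V] (A : V → V → Prop) (q : ℕ) (c : ZMod q → V)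
    (hMSD : IsMSD A) (hc : IsCycleIn A q c)
    (p : List (Set V)) (hne : p ≠ []) (hlen : 2 ≤ p.length)
    (hSC : ∀ S ∈ p, IsSC (DelCycle A q c) S)
    (hchain : List.Chain' (HAdj (DelCycle A q c)) p) (hnodup : p.Nodup)
    (hmin : ¬ ∃ U : Set V, HAdj (DelCycle A q c) U (p.head hne))
    (hmax : ¬ ∃ U : Set V, HAdj (DelCycle A q c) (p.getLast hne) U) :
    ∃ S ∈ p.tail.dropLast, HLinear (DelCycle A q c) S := by
  classical
  by_contra hno
  push_neg at hno
  set k := p.length - 1 with hk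
  have hk1 : 1 ≤ k := by omega
  set w : ℕ → Set V := fun j => p.getD j ∅ with hw
  have hwj : ∀ {j : ℕ} (h : j < p.length), w j = p[j]'h := by
    intro j h
    exact List.getD_eq_getElem p ∅ h
  -- basic facts in terms of `w`
  have hchainw : ∀ j, j + 1 ≤ k → HAdj (DelCycle A q c) (w j) (w (j + 1)) := by
    intro j hj
    have h1 : j < p.length - 1 := by omega
    have := List.isChain_iff_getElem.mp hchain j (by omega)
    rwa [hwj (by omega), hwj (by omega)]
  have hscw : ∀ j, j ≤ k → IsSC (DelCycle A q c) (w j) := by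
    intro j hj
    have h : j < p.length := by omega
    rw [hwj h]
    exact hSC _ (List.getElem_mem h)
  have hnodupw : ∀ i j, i ≤ k → j ≤ k → w i = w j → i = j := by
    intro i j hi hj hij
    have h1 : i < p.length := by omega
    have h2 : j < p.length := by omega
    rw [hwj h1, hwj h2] at hij
    have hinj := List.nodup_iff_injective_get.mp hnodup
    have h3 : (⟨i, h1⟩ : Fin p.length) = ⟨j, h2⟩ := hinj (by
      rw [List.get_eq_getElem, List.get_eq_getElem]
      exact hij)
    simpa using congrArg Fin.val h3
  have hhead : p.head hne = w 0 := by
    rw [List.head_eq_getElem, hwj (by omega)]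
  have hlast : p.getLast hne = w k := by
    rw [List.getLast_eq_getElem, hwj (by omega)]
  have hmem : ∀ j, 1 ≤ j → j ≤ k - 1 → w j ∈ p.tail.dropLast := by
    intro j h1 h2
    have hlt : j - 1 < p.tail.dropLast.length := by
      rw [List.length_dropLast, List.length_tail]
      omega
    have he : p.tail.dropLast[j - 1]'hlt = w j := by
      rw [List.getElem_dropLast, List.getElem_tail]
      have e1 : j - 1 + 1 = j := by omega
      simp only [e1]
      rw [hwj]
    rw [← he]
    exact List.getElem_mem _
  have hNL : ∀ j, 1 ≤ j → j ≤ k - 1 → ¬ HLinear (DelCycle A q c) (w j) :=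
    fun j h1 h2 => hno _ (hmem j h1 h2)
  -- the endpoints meet the cycle
  have h0w : OnW q c (w 0) := by
    have hne0 : ¬ (w 0 = w k) := by
      intro h
      have := hnodupw 0 k (by omega) le_rfl h
      omega
    rcases (g_strong hMSD (hscw k le_rfl) (hscw 0 (by omega))).cases_tail with heq | ⟨Z, _, hZ0⟩
    · exact absurd heq hne0
    · rcases gadj_resolve hZ0 with hh | ⟨i, _, hi1⟩
      · exact absurd ⟨Z, hhead ▸ hh⟩ hmin
      · exact ⟨i + 1, hi1⟩
  have hkw : OnW q c (w k) := by
    have hnek : ¬ (w k = w 0) := by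
      intro h
      have := hnodupw k 0 le_rfl (by omega) h
      omega
    rcases (g_strong hMSD (hscw k le_rfl) (hscw 0 (by omega))).cases_head with heq | ⟨Z, hkZ, _⟩
    · exact absurd heq hnek
    · rcases gadj_resolve hkZ with hh | ⟨i, hi, _⟩
      · exact absurd ⟨Z, hlast ▸ hh⟩ hmax
      · exact ⟨i, hi⟩
  -- the path has length at least 2
  have hk2 : 2 ≤ k := by
    rcases Nat.lt_or_ge k 2 with h | h
    · exfalso
      have hkeq : k = 1 := by omega
      exact hadj_onW_false hMSD hc (hkeq ▸ hchainw 0 (by omega)) h0w (hkeq ▸ hkw)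
    · exact h
  -- unique in-neighbours propagate along the path
  have key : ∀ d, d + 1 ≤ k - 1 → ∀ Z, GAdj A q c Z (w (d + 1)) → Z = w d := by
    intro d
    induction d with
    | zero =>
      intro _
      exact in_unique hMSD hc (hchainw 0 (by omega)) h0w
    | succ d ih =>
      intro hd Z hZ
      have hd' : d + 1 ≤ k - 1 := by omega
      have hstep := step_unique hMSD hc (hchainw d (by omega)) (hchainw (d + 1) (by omega))
        (ih hd') (hNL (d + 1) (by omega) hd') ⟨w k, hscw k le_rfl, hkw⟩
      exact hstep Z hZ
  have hIndk : ∀ Z, GAdj A q c Z (w (k - 1)) → Z = w (k - 2) := by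
    have e : k - 2 + 1 = k - 1 := by omega
    intro Z hZ
    exact key (k - 2) (by omega) Z (by rwa [e])
  -- the next-to-last vertex is linear: contradiction
  have hout := out_unique hMSD hc
    (show HAdj (DelCycle A q c) (w (k - 1)) (w k) by
      have := hchainw (k - 1) (by omega)
      rwa [show k - 1 + 1 = k by omega] at this) hkw
  apply hNL (k - 1) (by omega) le_rfl
  constructor
  · have : {T : Set V | HAdj (DelCycle A q c) T (w (k - 1))} = {w (k - 2)} := by
      ext Z
      simp only [Set.mem_setOf_eq, Set.mem_singleton_iff]
      constructor
      · exact fun h => hIndk Z (hadj_gadj h)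
      · rintro rfl
        have := hchainw (k - 2) (by omega)
        rwa [show k - 2 + 1 = k - 1 by omega] at this
    rw [HIndeg, this, Set.ncard_singleton]
  · have : {T : Set V | HAdj (DelCycle A q c) (w (k - 1)) T} = {w k} := by
      ext Z
      simp only [Set.mem_setOf_eq, Set.mem_singleton_iff]
      constructor
      · exact fun h => hout Z (hadj_gadj h)
      · rintro rfl
        have := hchainw (k - 1) (by omega)
        rwa [show k - 1 + 1 = k by omega] at this
    rw [HOutdeg, this, Set.ncard_singleton]
end

section
/- Let D be a minimal strong digraph (MSD), C_q a directed cycle of length q contained in D, D' the digraph obtained from D by deleting all arcs of C_q, and H the Hasse diagram associated to (D,C_q), obtained from D' by contracting each strong component to a single vertex. Then the number of linear vertices of H is greater than or equal to the number of pseudominimal vertices of H, and also greater than or equal to the number of pseudomaximal vertices of H. -/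
open Relation

/-! ### Generic relation helpers -/

theorem Relation.ReflTransGen.monoOld {α : Type*} {r p : α → α → Prop} {a b : α}
    (h : ReflTransGen r a b) (hp : ∀ a b, r a b → p a b) : ReflTransGen p a b :=
  ReflTransGen.mono hp a b h


/-- Relation `B` with the single arc `(a,b)` deleted. -/
def Del2 {α : Type*} (B : α → α → Prop) (a b : α) : α → α → Prop :=
  fun x y => B x y ∧ ¬(x = a ∧ y = b)

theorem rtg_congr {α : Type*} {B C : α → α → Prop} (h : ∀ x y, B x y ↔ C x y) {x y : α} :
    ReflTransGen B x y ↔ ReflTransGen C x y :=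
  ⟨ReflTransGen.mono (fun a b hab => (h a b).1 hab) _ _,
   ReflTransGen.mono (fun a b hab => (h a b).2 hab) _ _⟩

/-- Splitting a walk at the deleted arc. -/
theorem rtg_split {α : Type*} (B : α → α → Prop) (a b : α) {x y : α}
    (h : ReflTransGen B x y) :
    ReflTransGen (Del2 B a b) x y ∨
      (ReflTransGen (Del2 B a b) x a ∧ ReflTransGen (Del2 B a b) b y) := by
  induction h with
  | refl => exact Or.inl .refl
  | @tail p z h1 h2 ih =>
    by_cases hpz : p = a ∧ z = b
    · obtain ⟨rfl, rfl⟩ := hpz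
      rcases ih with h | ⟨ha, _⟩
      · exact Or.inr ⟨h, .refl⟩
      · exact Or.inr ⟨ha, .refl⟩
    · rcases ih with h | ⟨ha, hb⟩
      · exact Or.inl (h.tail ⟨h2, hpz⟩)
      · exact Or.inr ⟨ha, hb.tail ⟨h2, hpz⟩⟩

theorem rtg_patch {α : Type*} (B : α → α → Prop) (a b : α)
    (hab : ReflTransGen (Del2 B a b) a b) {x y : α} (h : ReflTransGen B x y) :
    ReflTransGen (Del2 B a b) x y := by
  induction h with
  | refl => exact .refl
  | @tail p z h1 h2 ih =>
    by_cases hpz : p = a ∧ z = b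
    · obtain ⟨rfl, rfl⟩ := hpz; exact ih.trans hab
    · exact ih.tail ⟨h2, hpz⟩

/-- In an MSD, no deleted arc can be bypassed. -/
theorem msd_essential {V : Type*} {A : V → V → Prop} (hMSD : IsMSD A) {a b : V}
    (hab : A a b) (h : ReflTransGen (Del2 A a b) a b) : False :=
  hMSD.2 a b hab (fun x y => rtg_patch A a b h (hMSD.1 x y))

theorem reach_union_last {α : Type*} {B C : α → α → Prop} {x y : α}
    (h : ReflTransGen (fun p r => B p r ∨ C p r) x y) :
    ReflTransGen B x y ∨ ∃ p r, C p r ∧ ReflTransGen B r y := by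
  induction h with
  | refl => exact Or.inl .refl
  | @tail p z h1 h2 ih =>
    rcases h2 with hB | hC
    · rcases ih with h | ⟨s, t, hC, ht⟩
      · exact Or.inl (h.tail hB)
      · exact Or.inr ⟨s, t, hC, ht.tail hB⟩
    · exact Or.inr ⟨p, z, hC, .refl⟩

theorem reach_union_first {α : Type*} {B C : α → α → Prop} {x y : α}
    (h : ReflTransGen (fun p r => B p r ∨ C p r) x y) :
    ReflTransGen B x y ∨ ∃ p r, C p r ∧ ReflTransGen B x p := by
  induction h using ReflTransGen.head_induction_on with
  | refl => exact Or.inl .refl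
  | @head s t h1 h2 ih =>
    rcases h1 with hB | hC
    · rcases ih with h | ⟨p, r, hC, hp⟩
      · exact Or.inl (h.head hB)
      · exact Or.inr ⟨p, r, hC, hp.head hB⟩
    · exact Or.inr ⟨s, t, hC, .refl⟩

/-! ### Strong component helpers -/

section SC
variable {V : Type*} {B : V → V → Prop}

theorem mut_rfl (v : V) : MutReach B v v := ⟨.refl, .refl⟩

theorem mut_symm {u v : V} (h : MutReach B u v) : MutReach B v u := ⟨h.2, h.1⟩

theorem mut_trans {u v w : V} (h : MutReach B u v) (h' : MutReach B v w) :
    MutReach B u w := ⟨h.1.trans h'.1, h'.2.trans h.2⟩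

theorem sc_eq_of_mem {S : Set V} (hS : IsSC B S) {x : V} (hx : x ∈ S) :
    S = {u | MutReach B x u} := by
  obtain ⟨v, rfl⟩ := hS
  ext u
  exact ⟨fun hu => mut_trans (mut_symm hx) hu, fun hu => mut_trans hx hu⟩

theorem sc_mutreach {S : Set V} (hS : IsSC B S) {x y : V} (hx : x ∈ S) (hy : y ∈ S) :
    MutReach B x y := by
  rw [sc_eq_of_mem hS hx] at hy; exact hy

theorem sc_merge {S T : Set V} (hS : IsSC B S) (hT : IsSC B T) {x y : V}
    (hx : x ∈ S) (hy : y ∈ T) (h : MutReach B x y) : S = T := by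
  rw [sc_eq_of_mem hS hx, sc_eq_of_mem hT hy]
  ext u
  exact ⟨fun hu => mut_trans (mut_symm h) hu, fun hu => mut_trans h hu⟩

theorem sc_unique {S T : Set V} (hS : IsSC B S) (hT : IsSC B T) {x : V}
    (hx : x ∈ S) (hx' : x ∈ T) : S = T :=
  sc_merge hS hT hx hx' (mut_rfl x)

theorem sc_nonempty {S : Set V} (hS : IsSC B S) : ∃ v, v ∈ S := by
  obtain ⟨v, rfl⟩ := hS; exact ⟨v, mut_rfl v⟩

end SC
/-! ### Cycle decomposition helpers -/

/-- The arc relation consisting of exactly the arcs of the cycle. -/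
def CycRel {V : Type*} (q : ℕ) (c : ZMod q → V) : V → V → Prop :=
  fun x y => ∃ i : ZMod q, x = c i ∧ y = c (i + 1)

section CycleLemmas
variable {V : Type*} {A : V → V → Prop} {q : ℕ} {c : ZMod q → V}

theorem cyc_sub_A (hc : IsCycleIn A q c) {x y : V} (h : CycRel q c x y) : A x y := by
  obtain ⟨i, rfl, rfl⟩ := h; exact hc.2.2 i

theorem cyc_ne_pair {u w x y : V} (he : DelCycle A q c u w) (h : CycRel q c x y) :
    ¬(x = u ∧ y = w) := by
  rintro ⟨rfl, rfl⟩
  obtain ⟨i, hx, hy⟩ := h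
  exact he.2 ⟨i, hx, hy⟩

theorem reach_cyc (hc : IsCycleIn A q c) (i j : ZMod q) :
    Relation.ReflTransGen (CycRel q c) (c i) (c j) := by
  haveI : NeZero q := ⟨by have := hc.1; omega⟩
  have key : ∀ k : ℕ, Relation.ReflTransGen (CycRel q c) (c i) (c (i + (k : ZMod q))) := by
    intro k
    induction k with
    | zero => simpa using Relation.ReflTransGen.refl
    | succ m ih =>
      have harc : CycRel q c (c (i + (m : ZMod q))) (c (i + (m : ZMod q) + 1)) :=
        ⟨i + (m : ZMod q), rfl, rfl⟩
      have : ((m + 1 : ℕ) : ZMod q) = (m : ZMod q) + 1 := by push_cast; ring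
      rw [this, ← add_assoc]
      exact ih.tail harc
  have hval : (((j - i).val : ℕ) : ZMod q) = j - i := by
    simp [ZMod.natCast_val, ZMod.cast_id]
  have := key (j - i).val
  rwa [hval, add_sub_cancel] at this

theorem del2_decomp {u w : V} (hc : IsCycleIn A q c) (he : DelCycle A q c u w) (x y : V) :
    Del2 A u w x y ↔
      (Del2 (DelCycle A q c) u w x y ∨ CycRel q c x y) := by
  constructor
  · rintro ⟨hA, hne⟩
    by_cases hcy : ∃ i : ZMod q, x = c i ∧ y = c (i + 1)
    · exact Or.inr hcy
    · exact Or.inl ⟨⟨hA, hcy⟩, hne⟩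
  · rintro (⟨⟨hA, _⟩, hne⟩ | hcy)
    · exact ⟨hA, hne⟩
    · exact ⟨cyc_sub_A hc hcy, cyc_ne_pair he hcy⟩

theorem del2_decomp2 {u w u' w' : V} (hc : IsCycleIn A q c)
    (he : DelCycle A q c u w) (he' : DelCycle A q c u' w') (x y : V) :
    Del2 (Del2 A u w) u' w' x y ↔
      (Del2 (Del2 (DelCycle A q c) u w) u' w' x y ∨ CycRel q c x y) := by
  constructor
  · rintro ⟨⟨hA, hne⟩, hne'⟩
    by_cases hcy : ∃ i : ZMod q, x = c i ∧ y = c (i + 1)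
    · exact Or.inr hcy
    · exact Or.inl ⟨⟨⟨hA, hcy⟩, hne⟩, hne'⟩
  · rintro (⟨⟨⟨hA, _⟩, hne⟩, hne'⟩ | hcy)
    · exact ⟨⟨hA, hne⟩, hne'⟩
    · exact ⟨⟨cyc_sub_A hc hcy, cyc_ne_pair he hcy⟩, cyc_ne_pair he' hcy⟩

end CycleLemmas
/-! ### Structural lemmas about the Hasse diagram of an MSD -/

section PLemmas
variable {V : Type*} {A : V → V → Prop} {q : ℕ} {c : ZMod q → V}

open Relation

/-- Sinks of the Hasse diagram are anchored. -/
theorem P1 (hMSD : IsMSD A) {S : Set V} (hS : IsSC (DelCycle A q c) S)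
    (hout : ∀ T, ¬ HAdj (DelCycle A q c) S T) : ∃ i, c i ∈ S := by
  by_contra hanch
  push_neg at hanch
  obtain ⟨v, hv⟩ := sc_nonempty hS
  have key : ∀ y, ReflTransGen A v y → y ∈ S ∨ ∃ a b, a ∈ S ∧ b ∉ S ∧ A a b := by
    intro y hy
    induction hy with
    | refl => exact Or.inl hv
    | @tail p r h1 h2 ih =>
      rcases ih with hp | hex
      · by_cases hr : r ∈ S
        · exact Or.inl hr
        · exact Or.inr ⟨p, r, hp, hr, h2⟩
      · exact Or.inr hex
  rcases key (c 0) (hMSD.1 v (c 0)) with h | ⟨a, b, haS, hbS, hab⟩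
  · exact hanch 0 h
  · by_cases hD : DelCycle A q c a b
    · have hT : IsSC (DelCycle A q c) {u | MutReach (DelCycle A q c) b u} := ⟨b, rfl⟩
      have hbT : b ∈ {u | MutReach (DelCycle A q c) b u} := mut_rfl b
      have hne : S ≠ {u | MutReach (DelCycle A q c) b u} := fun h => hbS (h ▸ hbT)
      exact hout _ ⟨hS, hT, hne, a, haS, b, hbT, hD⟩
    · have : ∃ i : ZMod q, a = c i ∧ b = c (i + 1) := by
        by_contra hn; exact hD ⟨hab, hn⟩
      obtain ⟨i, rfl, -⟩ := this
      exact hanch i haS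

/-- No arc of the Hasse diagram joins two anchored components. -/
theorem P2 (hMSD : IsMSD A) (hc : IsCycleIn A q c) {S T : Set V} {u w : V} {i j : ZMod q}
    (hS : IsSC (DelCycle A q c) S) (hT : IsSC (DelCycle A q c) T)
    (hu : u ∈ S) (hw : w ∈ T) (hi : c i ∈ S) (hj : c j ∈ T)
    (he : DelCycle A q c u w) (hST : S ≠ T) : False := by
  set D := DelCycle A q c with hD
  have notR : ¬ ReflTransGen (Del2 A u w) u w := fun h => msd_essential hMSD he.1 h
  have monoDel : ∀ a b, Del2 D u w a b → Del2 A u w a b := fun a b hab => ⟨hab.1.1, hab.2⟩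
  have monoCyc : ∀ a b, CycRel q c a b → Del2 A u w a b := fun a b hcy =>
    ⟨cyc_sub_A hc hcy, cyc_ne_pair he hcy⟩
  have h1' : ReflTransGen (Del2 D u w) u (c i) := by
    rcases rtg_split D u w (sc_mutreach hS hu hi).1 with h | ⟨-, hwi⟩
    · exact h
    · exfalso
      have hwci : ReflTransGen D w (c i) := hwi.monoOld fun a b hab => hab.1
      have hciw : ReflTransGen D (c i) w := ((sc_mutreach hS hi hu).1).tail he
      exact hST (sc_merge hS hT hi hw ⟨hciw, hwci⟩)
  have h2' : ReflTransGen (Del2 D u w) (c j) w := by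
    rcases rtg_split D u w (sc_mutreach hT hj hw).1 with h | ⟨hju, -⟩
    · exact h
    · exfalso
      have hcju : ReflTransGen D (c j) u := hju.monoOld fun a b hab => hab.1
      have hcicj : ReflTransGen D (c i) (c j) :=
        (((sc_mutreach hS hi hu).1).tail he).trans (sc_mutreach hT hw hj).1
      have hcjci : ReflTransGen D (c j) (c i) := hcju.trans (sc_mutreach hS hu hi).1
      exact hST (sc_merge hS hT hi hj ⟨hcicj, hcjci⟩)
  exact notR (((h1'.monoOld monoDel).trans ((reach_cyc hc i j).monoOld monoCyc)).trans
    (h2'.monoOld monoDel))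

/-- The head of any arc leaving an anchored component has indegree 1:
there cannot be a second component pointing to it. -/
theorem P3 (hMSD : IsMSD A) (hc : IsCycleIn A q c) {S T T' : Set V} {u w u' w' : V}
    {i : ZMod q}
    (hS : IsSC (DelCycle A q c) S) (hT : IsSC (DelCycle A q c) T)
    (hT' : IsSC (DelCycle A q c) T')
    (hu : u ∈ S) (hw : w ∈ T) (hu' : u' ∈ T') (hw' : w' ∈ T) (hi : c i ∈ S)
    (he : DelCycle A q c u w) (he' : DelCycle A q c u' w')
    (hST : S ≠ T) (hT'T : T' ≠ T) (hT'S : T' ≠ S) : False := by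
  set D := DelCycle A q c with hD
  have notR : ¬ ReflTransGen (Del2 A u w) u w := fun h => msd_essential hMSD he.1 h
  have monoDel : ∀ a b, Del2 D u w a b → Del2 A u w a b := fun a b hab => ⟨hab.1.1, hab.2⟩
  have monoCyc : ∀ a b, CycRel q c a b → Del2 A u w a b := fun a b hcy =>
    ⟨cyc_sub_A hc hcy, cyc_ne_pair he hcy⟩
  have hene' : ¬(u' = u ∧ w' = w) := by
    rintro ⟨rfl, -⟩
    exact hT'S (sc_unique hT' hS hu' hu)
  have he'R : Del2 A u w u' w' := ⟨he'.1, hene'⟩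
  -- (1) u ⇝ c i avoiding the arc (u,w)
  have h1' : ReflTransGen (Del2 D u w) u (c i) := by
    rcases rtg_split D u w (sc_mutreach hS hu hi).1 with h | ⟨-, hwi⟩
    · exact h
    · exfalso
      have hwci : ReflTransGen D w (c i) := hwi.monoOld fun a b hab => hab.1
      have hciw : ReflTransGen D (c i) w := ((sc_mutreach hS hi hu).1).tail he
      exact hST (sc_merge hS hT hi hw ⟨hciw, hwci⟩)
  -- (4) w' ⇝ w avoiding the arc (u,w)
  have h4' : ReflTransGen (Del2 D u w) w' w := by
    rcases rtg_split D u w (sc_mutreach hT hw' hw).1 with h | ⟨hw'u, -⟩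
    · exact h
    · exfalso
      have hw'uD : ReflTransGen D w' u := hw'u.monoOld fun a b hab => hab.1
      have huw' : ReflTransGen D u w' := (ReflTransGen.single he).trans (sc_mutreach hT hw hw').1
      exact hST (sc_merge hS hT hu hw' ⟨huw', hw'uD⟩)
  -- main case analysis
  rcases rtg_split A u w (hMSD.1 (c i) u') with hciu' | ⟨-, hwu'⟩
  · exact notR ((((h1'.monoOld monoDel).trans hciu').tail he'R).trans (h4'.monoOld monoDel))
  · -- w ⇝ u' avoiding (u,w); remove also (u',w')
    have hw2 : ReflTransGen (Del2 (Del2 A u w) u' w') w u' := by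
      rcases rtg_split (Del2 A u w) u' w' hwu' with h | ⟨h, -⟩ <;> exact h
    have hw3 : ReflTransGen
        (fun p r => Del2 (Del2 D u w) u' w' p r ∨ CycRel q c p r) w u' :=
      (rtg_congr (del2_decomp2 hc he he')).1 hw2
    rcases reach_union_last hw3 with hwu'0 | ⟨p, r, ⟨m, hpm, hrm⟩, hcm⟩
    · have h5 : ReflTransGen D w u' := hwu'0.monoOld fun a b hab => hab.1.1
      have h6 : ReflTransGen D u' w := (ReflTransGen.single he').trans (sc_mutreach hT hw' hw).1
      exact hT'T (sc_merge hT' hT hu' hw ⟨h6, h5⟩)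
    · subst hrm
      have hcmu' : ReflTransGen (Del2 A u w) (c (m + 1)) u' :=
        hcm.monoOld fun a b hab => ⟨hab.1.1.1, hab.1.2⟩
      exact notR (((((h1'.monoOld monoDel).trans
        ((reach_cyc hc i (m + 1)).monoOld monoCyc)).trans hcmu').tail he'R).trans
        (h4'.monoOld monoDel))

/-- No arc of the Hasse diagram goes from a component of outdegree ≥ 2 to a
component of indegree ≥ 2. -/
theorem P4 (hMSD : IsMSD A) (hc : IsCycleIn A q c) {S T T' Z : Set V}
    {u w u' w' x z : V}
    (hS : IsSC (DelCycle A q c) S) (hT : IsSC (DelCycle A q c) T)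
    (hT' : IsSC (DelCycle A q c) T') (hZ : IsSC (DelCycle A q c) Z)
    (hu : u ∈ S) (hw : w ∈ T) (hu' : u' ∈ T') (hw' : w' ∈ T) (hx : x ∈ S) (hz : z ∈ Z)
    (he : DelCycle A q c u w) (he' : DelCycle A q c u' w') (hf : DelCycle A q c x z)
    (hST : S ≠ T) (hT'T : T' ≠ T) (hT'S : T' ≠ S) (hZT : Z ≠ T) (hZS : Z ≠ S) : False := by
  set D := DelCycle A q c with hD
  have notR : ¬ ReflTransGen (Del2 A u w) u w := fun h => msd_essential hMSD he.1 h
  have monoDel : ∀ a b, Del2 D u w a b → Del2 A u w a b := fun a b hab => ⟨hab.1.1, hab.2⟩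
  have monoCyc : ∀ a b, CycRel q c a b → Del2 A u w a b := fun a b hcy =>
    ⟨cyc_sub_A hc hcy, cyc_ne_pair he hcy⟩
  have hene' : ¬(u' = u ∧ w' = w) := by
    rintro ⟨rfl, -⟩
    exact hT'S (sc_unique hT' hS hu' hu)
  have henef : ¬(x = u ∧ z = w) := by
    rintro ⟨-, rfl⟩
    exact hZT (sc_unique hZ hT hz hw)
  have he'R : Del2 A u w u' w' := ⟨he'.1, hene'⟩
  have hfR : Del2 A u w x z := ⟨hf.1, henef⟩
  -- (i) u ⇝ x avoiding (u,w), hence u ⇝ z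
  have h1' : ReflTransGen (Del2 D u w) u x := by
    rcases rtg_split D u w (sc_mutreach hS hu hx).1 with h | ⟨-, hwx⟩
    · exact h
    · exfalso
      have hwu : ReflTransGen D w u := (hwx.monoOld fun a b hab => hab.1).trans
        (sc_mutreach hS hx hu).1
      have huw : ReflTransGen D u w := ReflTransGen.single he
      exact hST (sc_merge hS hT hu hw ⟨huw, hwu⟩)
  have huz : ReflTransGen (Del2 A u w) u z := (h1'.monoOld monoDel).tail hfR
  -- (4) w' ⇝ w avoiding (u,w)
  have h4' : ReflTransGen (Del2 D u w) w' w := by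
    rcases rtg_split D u w (sc_mutreach hT hw' hw).1 with h | ⟨hw'u, -⟩
    · exact h
    · exfalso
      have hw'uD : ReflTransGen D w' u := hw'u.monoOld fun a b hab => hab.1
      have huw' : ReflTransGen D u w' := (ReflTransGen.single he).trans (sc_mutreach hT hw hw').1
      exact hST (sc_merge hS hT hu hw' ⟨huw', hw'uD⟩)
  -- (M0) some cycle vertex reaches u' avoiding both (u,w) and (u',w')
  have hM0 : ∃ m : ZMod q, ReflTransGen (Del2 (Del2 D u w) u' w') (c m) u' := by
    have hstep : ∀ v₀ : V, ReflTransGen (Del2 A u w) v₀ u' →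
        (ReflTransGen (Del2 (Del2 D u w) u' w') v₀ u' ∨
          ∃ m : ZMod q, ReflTransGen (Del2 (Del2 D u w) u' w') (c m) u') := by
      intro v₀ hv₀
      have hv₂ : ReflTransGen (Del2 (Del2 A u w) u' w') v₀ u' := by
        rcases rtg_split (Del2 A u w) u' w' hv₀ with h | ⟨h, -⟩ <;> exact h
      have hv₃ : ReflTransGen
          (fun p r => Del2 (Del2 D u w) u' w' p r ∨ CycRel q c p r) v₀ u' :=
        (rtg_congr (del2_decomp2 hc he he')).1 hv₂
      rcases reach_union_last hv₃ with h | ⟨p, r, ⟨m, hpm, hrm⟩, hcm⟩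
      · exact Or.inl h
      · exact Or.inr ⟨m + 1, hrm ▸ hcm⟩
    rcases rtg_split A u w (hMSD.1 (c 0) u') with hc0 | ⟨-, hwu'⟩
    · rcases hstep _ hc0 with h | h
      · exact ⟨0, h⟩
      · exact h
    · rcases hstep _ hwu' with h | h
      · exfalso
        have h5 : ReflTransGen D w u' := h.monoOld fun a b hab => hab.1.1
        have h6 : ReflTransGen D u' w :=
          (ReflTransGen.single he').trans (sc_mutreach hT hw' hw).1
        exact hT'T (sc_merge hT' hT hu' hw ⟨h6, h5⟩)
      · exact h
  obtain ⟨m₀, hm₀⟩ := hM0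
  have hm₀R : ReflTransGen (Del2 A u w) (c m₀) u' :=
    hm₀.monoOld fun a b hab => ⟨hab.1.1.1, hab.1.2⟩
  -- (CYu) u cannot reach any cycle vertex avoiding (u,w)
  have hCYu : ∀ k : ZMod q, ¬ ReflTransGen (Del2 A u w) u (c k) := by
    intro k hk
    exact notR (((hk.trans ((reach_cyc hc k m₀).monoOld monoCyc)).trans hm₀R).tail he'R |>.trans
      (h4'.monoOld monoDel))
  have hCYz : ∀ k : ZMod q, ¬ ReflTransGen (Del2 A u w) z (c k) := fun k hk =>
    hCYu k (huz.trans hk)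
  -- (5) z ⇝ u avoiding (u,w)
  have hzu : ReflTransGen (Del2 A u w) z u := by
    rcases rtg_split A u w (hMSD.1 z u) with h | ⟨h, -⟩ <;> exact h
  -- (6) u ⇝ z within D'
  have huzD : ReflTransGen D u z := by
    have h1 : ReflTransGen (fun p r => Del2 D u w p r ∨ CycRel q c p r) u z :=
      (rtg_congr (del2_decomp hc he)).1 huz
    rcases reach_union_first h1 with h | ⟨p, r, ⟨m, hpm, hrm⟩, hup⟩
    · exact h.monoOld fun a b hab => hab.1
    · exfalso
      exact hCYu m (hpm ▸ (hup.monoOld monoDel))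
  -- (7) z ⇝ u within D'
  have hzuD : ReflTransGen D z u := by
    have h1 : ReflTransGen (fun p r => Del2 D u w p r ∨ CycRel q c p r) z u :=
      (rtg_congr (del2_decomp hc he)).1 hzu
    rcases reach_union_first h1 with h | ⟨p, r, ⟨m, hpm, hrm⟩, hzp⟩
    · exact h.monoOld fun a b hab => hab.1
    · exfalso
      exact hCYz m (hpm ▸ (hzp.monoOld monoDel))
  exact hZS (sc_merge hZ hS hz hu ⟨hzuD, huzD⟩)

end PLemmas
/-! ### Reversal (transpose) infrastructure -/

section Flip
variable {V : Type*} {A : V → V → Prop} {q : ℕ} {c : ZMod q → V}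

open Relation

theorem rtg_flipped {B C : V → V → Prop} (h : ∀ x y, B x y ↔ C y x) {x y : V} :
    ReflTransGen B x y ↔ ReflTransGen C y x := by
  rw [rtg_congr (C := Function.swap C) (fun a b => h a b)]
  exact Relation.reflTransGen_swap

theorem mut_flipped {B C : V → V → Prop} (h : ∀ x y, B x y ↔ C y x) {u v : V} :
    MutReach B u v ↔ MutReach C u v :=
  ⟨fun ⟨h1, h2⟩ => ⟨(rtg_flipped h).1 h2, (rtg_flipped h).1 h1⟩,
   fun ⟨h1, h2⟩ => ⟨(rtg_flipped h).2 h2, (rtg_flipped h).2 h1⟩⟩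

theorem isSC_flipped {B C : V → V → Prop} (h : ∀ x y, B x y ↔ C y x) {S : Set V} :
    IsSC B S ↔ IsSC C S := by
  refine exists_congr fun v => ?_
  have : {u | MutReach B v u} = {u | MutReach C v u} := Set.ext fun u => mut_flipped h
  rw [this]

theorem hadj_flipped {B C : V → V → Prop} (h : ∀ x y, B x y ↔ C y x) {S T : Set V} :
    HAdj B S T ↔ HAdj C T S := by
  constructor
  · rintro ⟨hS, hT, hne, u, hu, v, hv, harc⟩
    exact ⟨(isSC_flipped h).1 hT, (isSC_flipped h).1 hS, hne.symm, v, hv, u, hu, (h u v).1 harc⟩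
  · rintro ⟨hT, hS, hne, v, hv, u, hu, harc⟩
    exact ⟨(isSC_flipped h).2 hS, (isSC_flipped h).2 hT, hne.symm, u, hu, v, hv, (h u v).2 harc⟩

theorem isMSD_swap (h : IsMSD A) : IsMSD (Function.swap A) := by
  constructor
  · intro u v
    exact Relation.reflTransGen_swap.2 (h.1 v u)
  · intro a b hab hstrong
    apply h.2 b a hab
    intro x y
    have h1 := hstrong y x
    have h2 : ReflTransGen (Function.swap fun p r => A p r ∧ ¬(p = b ∧ r = a)) y x :=
      h1.monoOld fun p r hpr => ⟨hpr.1, fun hco => hpr.2 ⟨hco.2, hco.1⟩⟩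
    exact Relation.reflTransGen_swap.1 h2

theorem isCycleIn_swap (hc : IsCycleIn A q c) :
    IsCycleIn (Function.swap A) q (fun i => c (-i)) := by
  refine ⟨hc.1, ?_, ?_⟩
  · intro a b hab
    have : -a = -b := hc.2.1 hab
    exact neg_injective this
  · intro i
    show A (c (-(i + 1))) (c (-i))
    have h1 := hc.2.2 (-(i + 1))
    have h2 : -(i + 1) + 1 = -i := by ring
    rwa [h2] at h1

theorem delCycle_swap : ∀ x y,
    DelCycle (Function.swap A) q (fun i => c (-i)) x y ↔ DelCycle A q c y x := by
  intro x y
  have hiff : (∃ i : ZMod q, x = c (-i) ∧ y = c (-(i + 1))) ↔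
      (∃ j : ZMod q, y = c j ∧ x = c (j + 1)) := by
    constructor
    · rintro ⟨i, hx, hy⟩
      refine ⟨-(i + 1), hy, ?_⟩
      rw [show -(i + 1) + 1 = -i by ring]; exact hx
    · rintro ⟨j, hy, hx⟩
      refine ⟨-(j + 1), ?_, ?_⟩
      · rw [neg_neg]; exact hx
      · rw [show -(-(j + 1) + 1) = j by ring]; exact hy
  constructor
  · rintro ⟨hA, hn⟩
    exact ⟨hA, fun hco => hn (by simpa using hiff.2 hco)⟩
  · rintro ⟨hA, hn⟩
    exact ⟨hA, fun hco => hn (hiff.1 (by simpa using hco))⟩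

/-- Dual of `P3`: the tail of any arc entering an anchored component has outdegree 1. -/
theorem P3' (hMSD : IsMSD A) (hc : IsCycleIn A q c) {S T Z : Set V} {u w x z : V}
    {j : ZMod q}
    (hS : IsSC (DelCycle A q c) S) (hT : IsSC (DelCycle A q c) T)
    (hZ : IsSC (DelCycle A q c) Z)
    (hu : u ∈ S) (hw : w ∈ T) (hx : x ∈ S) (hz : z ∈ Z) (hj : c j ∈ T)
    (he : DelCycle A q c u w) (hf : DelCycle A q c x z)
    (hST : S ≠ T) (hZT : Z ≠ T) (hZS : Z ≠ S) : False := by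
  have hflip : ∀ a b, DelCycle (Function.swap A) q (fun i => c (-i)) a b ↔
      DelCycle A q c b a := delCycle_swap
  have hjT : (fun i : ZMod q => c (-i)) (-j) ∈ T := by
    show c (-(-j)) ∈ T
    rw [neg_neg]; exact hj
  exact P3 (isMSD_swap hMSD) (isCycleIn_swap hc)
    ((isSC_flipped hflip).2 hT) ((isSC_flipped hflip).2 hS) ((isSC_flipped hflip).2 hZ)
    hw hu hz hx hjT
    ((hflip w u).2 he) ((hflip z x).2 hf)
    (Ne.symm hST) hZS hZT

end Flip
/-! ### The chain argument -/

/-- Arrows used in the chain construction: Hasse arcs to a non-anchored component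
of indegree exactly one. -/
def ChainArrow {V : Type*} (A : V → V → Prop) (q : ℕ) (c : ZMod q → V) :
    Set V → Set V → Prop :=
  fun S T => HAdj (DelCycle A q c) S T ∧ (¬ ∃ i, c i ∈ T) ∧
    {P | HAdj (DelCycle A q c) P T} = {S}

section Chain
variable {V : Type*} {A : V → V → Prop} {q : ℕ} {c : ZMod q → V}

open Relation

theorem hasse_reps {B : V → V → Prop} :
    ∀ {S T : Set V}, ReflTransGen (HAdj B) S T → IsSC B S →
      ∀ x ∈ S, ∀ y ∈ T, ReflTransGen B x y := by
  intro S T h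
  induction h with
  | refl => intro hS x hx y hy; exact (sc_mutreach hS hx hy).1
  | @tail P T h1 h2 ih =>
    intro hS x hx y hy
    obtain ⟨hP, hT, hne, u0, hu0, v0, hv0, harc⟩ := h2
    exact ((ih hS x hx u0 hu0).tail harc).trans (sc_mutreach hT hv0 hy).1

theorem hasse_acyclic {B : V → V → Prop} {T U : Set V} (h1 : HAdj B T U)
    (h2 : ReflTransGen (HAdj B) U T) : False := by
  obtain ⟨hT, hU, hne, u0, hu0, v0, hv0, harc⟩ := h1
  have hrev : ReflTransGen B v0 u0 := hasse_reps h2 hU v0 hv0 u0 hu0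
  exact hne (sc_merge hT hU hu0 hv0 ⟨ReflTransGen.single harc, hrev⟩)

theorem hasse_desc [Fintype V] {B : V → V → Prop} {T U : Set V} (h : HAdj B T U) :
    {X | ReflTransGen (HAdj B) U X}.ncard < {X | ReflTransGen (HAdj B) T X}.ncard := by
  apply Set.ncard_lt_ncard ?_ (Set.toFinite _)
  constructor
  · intro X hX
    exact ReflTransGen.head h hX
  · intro hsub
    exact hasse_acyclic h (hsub (ReflTransGen.refl : T ∈ {X | ReflTransGen (HAdj B) T X}))

theorem nonanch_out (hMSD : IsMSD A) {S : Set V} (hS : IsSC (DelCycle A q c) S)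
    (h : ¬ ∃ i, c i ∈ S) : ∃ T, HAdj (DelCycle A q c) S T := by
  by_contra hn
  push_neg at hn
  exact h (P1 hMSD hS fun T hT => hn T hT)

theorem chainEx [Fintype V] (hMSD : IsMSD A) (hc : IsCycleIn A q c) :
    ∀ (n : ℕ) (T S₀ : Set V),
      {X | ReflTransGen (HAdj (DelCycle A q c)) T X}.ncard = n →
      IsSC (DelCycle A q c) T → (¬ ∃ i, c i ∈ T) →
      {P | HAdj (DelCycle A q c) P T} = {S₀} →
      ∃ L, ReflTransGen (ChainArrow A q c) T L ∧ HLinear (DelCycle A q c) L ∧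
        IsSC (DelCycle A q c) L := by
  intro n
  induction n using Nat.strong_induction_on with
  | _ n ih =>
  intro T S₀ hn hT hanch hin
  obtain ⟨U₁, hU₁⟩ := nonanch_out hMSD hT hanch
  have hindeg : HIndeg (DelCycle A q c) T = 1 := by
    rw [HIndeg, hin]; exact Set.ncard_singleton _
  by_cases hone : HOutdeg (DelCycle A q c) T = 1
  · exact ⟨T, ReflTransGen.refl, ⟨hindeg, hone⟩, hT⟩
  · have hpos : 0 < HOutdeg (DelCycle A q c) T :=
      (Set.ncard_pos (Set.toFinite _)).mpr ⟨U₁, hU₁⟩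
    have h2 : 1 < {X : Set V | HAdj (DelCycle A q c) T X}.ncard := by
      have : HOutdeg (DelCycle A q c) T = {X : Set V | HAdj (DelCycle A q c) T X}.ncard := rfl
      omega
    obtain ⟨U, Z, hU, hZ, hUZ⟩ := (Set.one_lt_ncard_iff (Set.toFinite _)).1 h2
    have hUnanch : ¬ ∃ i, c i ∈ U := by
      rintro ⟨j, hj⟩
      obtain ⟨-, hUsc, hTU, u, hu, w, hw, he⟩ := hU
      obtain ⟨-, hZsc, hTZ, x, hx, z, hz, hf⟩ := hZ
      exact P3' hMSD hc hT hUsc hZsc hu hw hx hz hj he hf hTU (Ne.symm hUZ) (Ne.symm hTZ)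
    have hUin : {P | HAdj (DelCycle A q c) P U} = {T} := by
      ext P
      simp only [Set.mem_setOf_eq, Set.mem_singleton_iff]
      refine ⟨fun hP => ?_, fun h => h ▸ hU⟩
      by_contra hPT
      obtain ⟨-, hUsc, hTU, u, hu, w, hw, he⟩ := hU
      obtain ⟨-, hZsc, hTZ, x, hx, z, hz, hf⟩ := hZ
      obtain ⟨hPsc, -, hPU, u', hu', w', hw', he'⟩ := hP
      exact P4 hMSD hc hT hUsc hPsc hZsc hu hw hu' hw' hx hz he he' hf
        hTU hPU hPT (Ne.symm hUZ) (Ne.symm hTZ)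
    have hlt : {X | ReflTransGen (HAdj (DelCycle A q c)) U X}.ncard < n :=
      hn ▸ hasse_desc hU
    obtain ⟨L, hL1, hL2, hL3⟩ := ih _ hlt U T rfl hU.2.1 hUnanch hUin
    exact ⟨L, hL1.head ⟨hU, hUnanch, hUin⟩, hL2, hL3⟩

theorem chain_back {S S' : Set V} :
    ∀ {L : Set V}, ReflTransGen (ChainArrow A q c) S L →
      (∃ i, c i ∈ S) → (∃ i, c i ∈ S') →
      ReflTransGen (ChainArrow A q c) S' L → S = S' := by
  intro L h
  induction h with
  | refl =>
    intro hS hS' h'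
    rcases h'.cases_tail with heq | ⟨P, hP, hPS⟩
    · exact heq
    · exact absurd hS hPS.2.1
  | @tail P L hSP hPL ih =>
    intro hS hS' h'
    rcases h'.cases_tail with heq | ⟨P', hP', hP'L⟩
    · exact absurd (heq ▸ hS') hPL.2.1
    · have hPP : P' = P := by
        have hmem : P' ∈ {Q | HAdj (DelCycle A q c) Q L} := hP'L.1
        rw [hPL.2.2] at hmem
        exact hmem
      exact ih hS hS' (hPP ▸ hP')

theorem mainIneq [Fintype V] (hMSD : IsMSD A) (hc : IsCycleIn A q c) :
    {S : Set V | IsSC (DelCycle A q c) S ∧ (∃ i : ZMod q, c i ∈ S) ∧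
        0 < HOutdeg (DelCycle A q c) S}.ncard ≤
      {S : Set V | IsSC (DelCycle A q c) S ∧ HLinear (DelCycle A q c) S}.ncard := by
  classical
  have hex2 : ∀ S, IsSC (DelCycle A q c) S → (∃ i : ZMod q, c i ∈ S) →
      0 < HOutdeg (DelCycle A q c) S →
      ∃ L, ReflTransGen (ChainArrow A q c) S L ∧ HLinear (DelCycle A q c) L ∧
        IsSC (DelCycle A q c) L := by
    intro S hS hanchS hpos
    obtain ⟨U, hU⟩ :=
      Set.nonempty_of_ncard_ne_zero (s := {T : Set V | HAdj (DelCycle A q c) S T})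
        (by have : HOutdeg (DelCycle A q c) S =
              {T : Set V | HAdj (DelCycle A q c) S T}.ncard := rfl
            omega)
    obtain ⟨i₀, hi₀⟩ := hanchS
    obtain ⟨-, hUsc, hSU, u, hu, w, hw, he⟩ := hU
    have hUnanch : ¬ ∃ i, c i ∈ U := by
      rintro ⟨j, hj⟩
      exact P2 hMSD hc hS hUsc hu hw hi₀ hj he hSU
    have hUin : {P | HAdj (DelCycle A q c) P U} = {S} := by
      ext P
      simp only [Set.mem_setOf_eq, Set.mem_singleton_iff]
      refine ⟨fun hP => ?_, fun h => h ▸ ⟨hS, hUsc, hSU, u, hu, w, hw, he⟩⟩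
      by_contra hPS
      obtain ⟨hPsc, -, hPU, u', hu', w', hw', he'⟩ := hP
      exact P3 hMSD hc hS hUsc hPsc hu hw hu' hw' hi₀ he he' hSU hPU hPS
    obtain ⟨L, hL1, hL2, hL3⟩ := chainEx hMSD hc _ U S rfl hUsc hUnanch hUin
    exact ⟨L, hL1.head ⟨⟨hS, hUsc, hSU, u, hu, w, hw, he⟩, hUnanch, hUin⟩, hL2, hL3⟩
  set P : Set V → Set V → Prop := fun S L =>
    ReflTransGen (ChainArrow A q c) S L ∧ HLinear (DelCycle A q c) L ∧
      IsSC (DelCycle A q c) L with hP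
  refine Set.ncard_le_ncard_of_injOn
    (fun S => if h : ∃ L, P S L then h.choose else S) ?_ ?_ (Set.toFinite _)
  · rintro S ⟨hS, hanchS, hpos⟩
    have h : ∃ L, P S L := hex2 S hS hanchS hpos
    simp only [dif_pos h]
    exact ⟨h.choose_spec.2.2, h.choose_spec.2.1⟩
  · rintro S ⟨hS, hanchS, hpos⟩ S' ⟨hS', hanchS', hpos'⟩ heq
    have h : ∃ L, P S L := hex2 S hS hanchS hpos
    have h' : ∃ L, P S' L := hex2 S' hS' hanchS' hpos'
    simp only [dif_pos h, dif_pos h'] at heq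
    have hc1 := h.choose_spec.1
    have hc2 := h'.choose_spec.1
    rw [heq] at hc1
    exact chain_back hc1 hanchS hanchS' hc2

end Chain
theorem stmt10' {V : Type*} [Fintype V] (A : V → V → Prop) (q : ℕ) (c : ZMod q → V)
    (hMSD : IsMSD A) (hc : IsCycleIn A q c) :
    {S : Set V | IsSC (DelCycle A q c) S ∧ (∃ i : ZMod q, c i ∈ S) ∧
        0 < HOutdeg (DelCycle A q c) S}.ncard ≤
      {S : Set V | IsSC (DelCycle A q c) S ∧ HLinear (DelCycle A q c) S}.ncard ∧
    {S : Set V | IsSC (DelCycle A q c) S ∧ (∃ i : ZMod q, c i ∈ S) ∧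
        0 < HIndeg (DelCycle A q c) S}.ncard ≤
      {S : Set V | IsSC (DelCycle A q c) S ∧ HLinear (DelCycle A q c) S}.ncard := by
  constructor
  · exact mainIneq hMSD hc
  · have hflip : ∀ a b, DelCycle (Function.swap A) q (fun i => c (-i)) a b ↔
        DelCycle A q c b a := delCycle_swap
    have hSC : ∀ S : Set V, IsSC (DelCycle (Function.swap A) q (fun i => c (-i))) S ↔
        IsSC (DelCycle A q c) S := fun S => isSC_flipped hflip
    have hHAdj : ∀ S T : Set V,
        HAdj (DelCycle (Function.swap A) q (fun i => c (-i))) S T ↔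
          HAdj (DelCycle A q c) T S := fun S T => hadj_flipped hflip
    have hOut : ∀ S : Set V, HOutdeg (DelCycle (Function.swap A) q (fun i => c (-i))) S =
        HIndeg (DelCycle A q c) S := fun S =>
      congrArg Set.ncard (Set.ext fun T => hHAdj S T)
    have hIn : ∀ S : Set V, HIndeg (DelCycle (Function.swap A) q (fun i => c (-i))) S =
        HOutdeg (DelCycle A q c) S := fun S =>
      congrArg Set.ncard (Set.ext fun T => hHAdj T S)
    have hanch : ∀ S : Set V,
        (∃ i : ZMod q, (fun i : ZMod q => c (-i)) i ∈ S) ↔ (∃ i : ZMod q, c i ∈ S) :=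
      fun S => ⟨fun ⟨i, h⟩ => ⟨-i, h⟩, fun ⟨i, h⟩ => ⟨-i, by
        show c (-(-i)) ∈ S
        rwa [neg_neg]⟩⟩
    have h1 : {S : Set V | IsSC (DelCycle (Function.swap A) q (fun i => c (-i))) S ∧
          (∃ i : ZMod q, (fun i : ZMod q => c (-i)) i ∈ S) ∧
          0 < HOutdeg (DelCycle (Function.swap A) q (fun i => c (-i))) S} =
        {S : Set V | IsSC (DelCycle A q c) S ∧ (∃ i : ZMod q, c i ∈ S) ∧
          0 < HIndeg (DelCycle A q c) S} := by
      ext S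
      simp only [Set.mem_setOf_eq, hSC, hanch, hOut]
    have h2 : {S : Set V | IsSC (DelCycle (Function.swap A) q (fun i => c (-i))) S ∧
          HLinear (DelCycle (Function.swap A) q (fun i => c (-i))) S} =
        {S : Set V | IsSC (DelCycle A q c) S ∧ HLinear (DelCycle A q c) S} := by
      ext S
      simp only [Set.mem_setOf_eq, hSC]
      refine and_congr Iff.rfl ?_
      unfold HLinear
      rw [hIn S, hOut S]
      exact and_comm
    rw [← h1, ← h2]
    exact mainIneq (isMSD_swap hMSD) (isCycleIn_swap hc)

/-- The number of linear vertices of the Hasse diagram `H` is at least the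
number of pseudominimal vertices of `H`, and at least the number of pseudomaximal
vertices of `H`. -/
theorem stmt10 {V : Type*} [Fintype V] (A : V → V → Prop) (q : ℕ) (c : ZMod q → V)
    (hMSD : IsMSD A) (hc : IsCycleIn A q c) :
    {S : Set V | IsSC (DelCycle A q c) S ∧ (∃ i : ZMod q, c i ∈ S) ∧
        0 < HOutdeg (DelCycle A q c) S}.ncard ≤
      {S : Set V | IsSC (DelCycle A q c) S ∧ HLinear (DelCycle A q c) S}.ncard ∧
    {S : Set V | IsSC (DelCycle A q c) S ∧ (∃ i : ZMod q, c i ∈ S) ∧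
        0 < HIndeg (DelCycle A q c) S}.ncard ≤
      {S : Set V | IsSC (DelCycle A q c) S ∧ HLinear (DelCycle A q c) S}.ncard := by
  exact stmt10' A q c hMSD hc
end

section
/- Let D be a minimal strong digraph (MSD), C_q a directed cycle of length q contained in D, and D' the digraph obtained from D by deleting all arcs of C_q. If a strong component S of D' contains a number λ > 1 of vertices of C_q, then S contains at least λ vertices that are linear in D. -/
open Relation

section Infra
variable {V : Type*}

def Del (A : V → V → Prop) (a b : V) : V → V → Prop :=
  fun x y => A x y ∧ ¬(x = a ∧ y = b)

lemma F1 {A : V → V → Prop} (hMSD : IsMSD A) {a b : V} (hab : A a b) :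
    ¬ Relation.ReflTransGen (Del A a b) a b := by
  intro hpath
  refine hMSD.2 a b hab ?_
  intro u v
  have h := hMSD.1 u v
  induction h with
  | refl => exact .refl
  | tail hp harc ih =>
    rename_i x y
    by_cases hxy : x = a ∧ y = b
    · exact (hxy.1 ▸ ih : Relation.ReflTransGen _ u a).trans (hxy.2 ▸ hpath)
    · exact ih.tail ⟨harc, hxy⟩

lemma no_self_loop {A : V → V → Prop} (hMSD : IsMSD A) {a : V} : ¬ A a a :=
  fun h => F1 hMSD h .refl

lemma avoid {R : V → V → Prop} {P : V → Prop} {a : V} (ha : ¬ P a)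
    (hstep : ∀ p q, R p q → ¬ P q → P p → q = a) :
    ∀ b, Relation.ReflTransGen R a b → ¬ P b →
      Relation.ReflTransGen (fun p q => R p q ∧ ¬ P p ∧ ¬ P q) a b := by
  intro b hb hPb
  induction hb with
  | refl => exact .refl
  | tail hp harc ih =>
    rename_i x y
    by_cases hPx : P x
    · have := hstep x y harc hPb hPx
      subst this; exact .refl
    · exact (ih hPx).tail ⟨harc, hPx, hPb⟩

lemma firstEntry {R : V → V → Prop} {K : Set V} :
    ∀ {a b : V}, Relation.ReflTransGen R a b → a ∉ K → b ∈ K →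
      ∃ d y, d ∉ K ∧ y ∈ K ∧ R d y := by
  intro a b h
  induction h with
  | refl => intro h1 h2; exact absurd h2 h1
  | tail hp harc ih =>
    rename_i x y
    intro haK hyK
    by_cases hxK : x ∈ K
    · exact ih haK hxK
    · exact ⟨x, y, hxK, hyK, harc⟩

def Region (A : V → V → Prop) (w v : V) : Set V :=
  {x | ¬ Relation.ReflTransGen (Del A w v) x v}

lemma head_not_mem_region {A : V → V → Prop} {w v : V} : v ∉ Region A w v :=
  fun h => h .refl

lemma not_mem_region_iff {A : V → V → Prop} {w v x : V} :
    x ∉ Region A w v ↔ Relation.ReflTransGen (Del A w v) x v := by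
  simp [Region]

lemma tail_mem_region {A : V → V → Prop} (hMSD : IsMSD A)
    {w v : V} (harc : A w v) : w ∈ Region A w v := F1 hMSD harc

lemma exit_only {A : V → V → Prop} {w v x y : V} (hx : x ∈ Region A w v)
    (harc : A x y) : (x = w ∧ y = v) ∨ y ∈ Region A w v := by
  by_cases h : x = w ∧ y = v
  · exact Or.inl h
  · right
    intro hy
    exact hx (Relation.ReflTransGen.head ⟨harc, h⟩ hy)

lemma drain {A : V → V → Prop}
    (hstrong : ∀ u v : V, Relation.ReflTransGen A u v)
    {w v x : V} (hx : x ∈ Region A w v) :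
    Relation.ReflTransGen
      (fun p q => A p q ∧ p ∈ Region A w v ∧ q ∈ Region A w v) x w := by
  have hpath : Relation.ReflTransGen A x v := hstrong x v
  induction hpath using Relation.ReflTransGen.head_induction_on with
  | refl => exact absurd hx head_not_mem_region
  | head harc hp ih =>
    rcases exit_only hx harc with ⟨haw, -⟩ | hc
    · subst haw; exact .refl
    · exact Relation.ReflTransGen.head ⟨harc, hx, hc⟩ (ih hc)

end Infra

section Main
variable {V : Type*} [Fintype V]

theorem region_linear (A : V → V → Prop) (hMSD : IsMSD A)
    (q : ℕ) (c : ZMod q → V) (S : Set V)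
    (hSreach : ∀ x y, x ∈ S → y ∈ S → Relation.ReflTransGen (DelCycle A q c) x y)
    (hSmid : ∀ a b x, a ∈ S → b ∈ S → Relation.ReflTransGen (DelCycle A q c) a x →
        Relation.ReflTransGen (DelCycle A q c) x b → x ∈ S) :
    ∀ (n : ℕ) (v w : V), A w v → v ∈ S → w ∈ S →
      Region A w v ∩ Set.range c = ∅ → (Region A w v).ncard ≤ n →
      ∃ ℓ, ℓ ∈ Region A w v ∧ ℓ ∈ S ∧ IsLinear A ℓ := by
  intro n
  induction n with
  | zero =>
    intro v w harc _ _ _ hn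
    have hwX : w ∈ Region A w v := tail_mem_region hMSD harc
    have : 0 < (Region A w v).ncard :=
      (Set.ncard_pos (Set.toFinite _)).mpr ⟨w, hwX⟩
    omega
  | succ n ih =>
    intro v w harc hvS hwS hXc hn
    set X := Region A w v with hXdef
    have hwX : w ∈ X := tail_mem_region hMSD harc
    have hvX : v ∉ X := head_not_mem_region
    have hvw : v ≠ w := fun h => hvX (h ▸ hwX)
    have hnc : ∀ x, x ∈ X → x ∉ Set.range c := by
      intro x hx hxc
      exact absurd (Set.mem_inter hx hxc) (by rw [hXc]; exact fun h => h)
    -- arcs inside X, seen as D' arcs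
    have hAXD : ∀ p r : V, A p r ∧ p ∈ X ∧ r ∈ X → DelCycle A q c p r := by
      rintro p r ⟨hpr, hpX, -⟩
      exact ⟨hpr, fun ⟨j, hj, _⟩ => hnc p hpX ⟨j, hj.symm⟩⟩
    -- M3 step : paths in Del A w v towards targets outside X never enter X
    have hstep3 : ∀ a : V, ∀ p r : V, Del A w v p r → r ∉ X → p ∈ X → r = a := by
      rintro a p r ⟨hpr, hne⟩ hrX hpX
      exact absurd ((exit_only hpX hpr).resolve_left hne) hrX
    by_cases hout : ∃ z, A w z ∧ z ≠ v
    · -- CASE 2 : w has a second out-arc; work in the bottom strong component K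
      obtain ⟨z, hwz, hzv⟩ := hout
      have hzX : z ∈ X := (exit_only hwX hwz).resolve_left (fun h => hzv h.2)
      have hzw : z ≠ w := fun h => no_self_loop hMSD (h ▸ hwz)
      set AX : V → V → Prop := fun p r => A p r ∧ p ∈ X ∧ r ∈ X with hAXdef
      set K : Set V := {k | Relation.ReflTransGen AX w k} with hKdef
      have hwK : w ∈ K := Relation.ReflTransGen.refl
      have hKsubX : ∀ k, k ∈ K → k ∈ X := by
        intro k hk
        rcases Relation.ReflTransGen.cases_tail hk with h | ⟨c', -, harc'⟩
        · exact h ▸ hwX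
        · exact harc'.2.2
      have hvK : v ∉ K := fun h => hvX (hKsubX v h)
      have hKS : ∀ k, k ∈ K → k ∈ S := by
        intro k hk
        have h1 : Relation.ReflTransGen (DelCycle A q c) w k :=
          Relation.ReflTransGen.mono (fun p r h => hAXD p r h) _ _ hk
        have h2 : Relation.ReflTransGen (DelCycle A q c) k w :=
          Relation.ReflTransGen.mono (fun p r h => hAXD p r h) _ _
            (drain hMSD.1 (hKsubX k hk))
        exact hSmid w w k hwS hwS h1 h2
      -- first entry into K along a path from v to w
      obtain ⟨d, y, hdK, hyK, hdy⟩ := firstEntry (hMSD.1 v w) hvK hwK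
      -- an in-arc of y from inside K
      obtain ⟨x', hx'K, hx'y⟩ : ∃ x', x' ∈ K ∧ A x' y := by
        by_cases hyw : y = w
        · have hdz : Relation.ReflTransGen AX z w := drain hMSD.1 hzX
          rcases Relation.ReflTransGen.cases_tail hdz with h | ⟨x', hzx', hx'w⟩
          · exact absurd h.symm hzw
          · refine ⟨x', ?_, by rw [hyw]; exact hx'w.1⟩
            exact (Relation.ReflTransGen.single ⟨hwz, hwX, hzX⟩).trans hzx'
        · have hy' : Relation.ReflTransGen AX w y := hyK
          rcases Relation.ReflTransGen.cases_tail hy' with h | ⟨x', hwx', hx'y⟩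
          · exact absurd h hyw
          · exact ⟨x', hwx', hx'y.1⟩
      have hyX : y ∈ X := hKsubX y hyK
      have hyS : y ∈ S := hKS y hyK
      have hx'S : x' ∈ S := hKS x' hx'K
      -- v reaches y avoiding the arc (x', y)
      have hstepK : ∀ p r : V, A p r → r ∉ K → p ∈ K → r = v := by
        intro p r hpr hrK hpK
        rcases exit_only (hKsubX p hpK) hpr with ⟨-, hrv⟩ | hrX
        · exact hrv
        · exact absurd (hpK.tail ⟨hpr, hKsubX p hpK, hrX⟩) hrK
      have hvd : Relation.ReflTransGen (fun p r => A p r ∧ p ∉ K ∧ r ∉ K) v d :=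
        avoid hvK hstepK d (hMSD.1 v d) hdK
      have hvy : Relation.ReflTransGen (Del A x' y) v y := by
        refine (Relation.ReflTransGen.mono ?_ _ _ hvd).tail ⟨hdy, fun hh => hdK (hh.1 ▸ hx'K)⟩
        intro p r h
        exact ⟨h.1, fun hh => h.2.1 (hh.1 ▸ hx'K)⟩
      -- the new region is strictly inside X
      have hsub : Region A x' y ⊆ X := by
        intro x hx'mem
        by_contra hxX
        have ρ : Relation.ReflTransGen
            (fun p r => Del A w v p r ∧ p ∉ X ∧ r ∉ X) x v :=
          avoid hxX (hstep3 x) v (not_mem_region_iff.mp hxX) hvX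
        have : Relation.ReflTransGen (Del A x' y) x y := by
          refine (Relation.ReflTransGen.mono ?_ _ _ ρ).trans hvy
          intro p r h
          exact ⟨h.1.1, fun hh => h.2.2 (hh.2 ▸ hyX)⟩
        exact hx'mem this
      have hssub : Region A x' y ⊂ X :=
        HasSubset.Subset.ssubset_of_ne hsub
          (fun h => (head_not_mem_region (A := A) (w := x') (v := y)) (h ▸ hyX))
      have hcard : (Region A x' y).ncard ≤ n := by
        have := Set.ncard_lt_ncard hssub (Set.toFinite X)
        omega
      have hempty : Region A x' y ∩ Set.range c = ∅ := by
        rw [Set.eq_empty_iff_forall_notMem]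
        rintro x ⟨hx1, hx2⟩
        exact hnc x (hsub hx1) hx2
      obtain ⟨ℓ, hℓ1, hℓ2, hℓ3⟩ := ih y x' hx'y hyS hx'S hempty hcard
      exact ⟨ℓ, hsub hℓ1, hℓ2, hℓ3⟩
    · -- CASE 1 : w has a unique out-arc (to v)
      have wuniq : ∀ y, A w y → y = v := by
        intro y hy
        by_contra h
        exact hout ⟨y, hy, h⟩
      have houtdeg : outdeg A w = 1 := by
        have : {u | A w u} = {v} := by
          apply Set.eq_singleton_iff_unique_mem.mpr
          exact ⟨harc, fun z hz => wuniq z hz⟩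
        rw [outdeg, this, Set.ncard_singleton]
      by_cases hdeg : ∃ e₁ e₂, A e₁ w ∧ A e₂ w ∧ e₁ ≠ e₂
      · -- w has two in-arcs : find an in-arc from S ∩ X and recurse
        have hsecond : ∀ e : V, ∃ eo, A eo w ∧ eo ≠ e := by
          intro e
          obtain ⟨e₁, e₂, h1, h2, h12⟩ := hdeg
          by_cases he1 : e₁ = e
          · exact ⟨e₂, h2, fun h => h12 (by rw [he1, h])⟩
          · exact ⟨e₁, h1, he1⟩
        -- a path from v to any non-w vertex avoiding w entirely
        have hstepW : ∀ p r : V, A p r → ¬ (r = w) → p = w → r = v := by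
          intro p r hpr _ hpw
          exact wuniq r (hpw ▸ hpr)
        have havoidW : ∀ eo : V, eo ≠ w →
            Relation.ReflTransGen (fun p r => A p r ∧ ¬(p = w) ∧ ¬(r = w)) v eo := by
          intro eo heow
          exact avoid (P := fun x => x = w) (a := v) hvw hstepW eo (hMSD.1 v eo) heow
        -- claim 1 : every in-neighbour of w lies in X
        have claim1 : ∀ e, A e w → e ∈ X := by
          intro e hew
          by_contra heX
          obtain ⟨eo, heo, heoe⟩ := hsecond e
          have heow : eo ≠ w := fun h => no_self_loop hMSD (h ▸ heo)
          have ρ : Relation.ReflTransGen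
              (fun p r => Del A w v p r ∧ p ∉ X ∧ r ∉ X) e v :=
            avoid heX (hstep3 e) v (not_mem_region_iff.mp heX) hvX
          have ρ' : Relation.ReflTransGen (Del A e w) e v :=
            Relation.ReflTransGen.mono (fun p r h => ⟨h.1.1, fun hh => h.2.2 (hh.2 ▸ hwX)⟩) _ _ ρ
          have σ : Relation.ReflTransGen (Del A e w) v w :=
            (Relation.ReflTransGen.mono (fun p r h => ⟨h.1, fun hh => h.2.2 hh.2⟩) _ _ (havoidW eo heow)).tail
              ⟨heo, fun hh => heoe hh.1⟩
          exact F1 hMSD hew (ρ'.trans σ)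
        -- claim 2 : some in-neighbour of w lies in S (the last arc of a D'-path)
        have hπ : Relation.ReflTransGen (DelCycle A q c) v w := hSreach v w hvS hwS
        rcases Relation.ReflTransGen.cases_tail hπ with h | ⟨p, hvp, hpw⟩
        · exact absurd h.symm hvw
        · have hpS : p ∈ S := hSmid v w p hvS hwS hvp (Relation.ReflTransGen.single hpw)
          have hpA : A p w := hpw.1
          have hpX : p ∈ X := claim1 p hpA
          obtain ⟨eo, heo, heop⟩ := hsecond p
          have heow : eo ≠ w := fun h => no_self_loop hMSD (h ▸ heo)
          have hsub : Region A p w ⊆ X := by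
            intro x hx'mem
            by_contra hxX
            have ρ : Relation.ReflTransGen
                (fun p' r => Del A w v p' r ∧ p' ∉ X ∧ r ∉ X) x v :=
              avoid hxX (hstep3 x) v (not_mem_region_iff.mp hxX) hvX
            have ρ' : Relation.ReflTransGen (Del A p w) x v :=
              Relation.ReflTransGen.mono (fun p' r h => ⟨h.1.1, fun hh => h.2.2 (hh.2 ▸ hwX)⟩) _ _ ρ
            have σ : Relation.ReflTransGen (Del A p w) v w :=
              (Relation.ReflTransGen.mono (fun p' r h => ⟨h.1, fun hh => h.2.2 hh.2⟩) _ _ (havoidW eo heow)).tail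
                ⟨heo, fun hh => heop hh.1⟩
            exact hx'mem (ρ'.trans σ)
          have hssub : Region A p w ⊂ X :=
            HasSubset.Subset.ssubset_of_ne hsub
              (fun h => (head_not_mem_region (A := A) (w := p) (v := w)) (h ▸ hwX))
          have hcard : (Region A p w).ncard ≤ n := by
            have := Set.ncard_lt_ncard hssub (Set.toFinite X)
            omega
          have hempty : Region A p w ∩ Set.range c = ∅ := by
            rw [Set.eq_empty_iff_forall_notMem]
            rintro x ⟨hx1, hx2⟩
            exact hnc x (hsub hx1) hx2
          obtain ⟨ℓ, hℓ1, hℓ2, hℓ3⟩ := ih w p hpA hwS hpS hempty hcard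
          exact ⟨ℓ, hsub hℓ1, hℓ2, hℓ3⟩
      · -- w has a unique in-arc as well : w is linear
        push_neg at hdeg
        obtain ⟨p₀, hp₀⟩ : ∃ p₀, A p₀ w := by
          rcases Relation.ReflTransGen.cases_tail (hMSD.1 v w) with h | ⟨p₀, -, hp₀⟩
          · exact absurd h.symm hvw
          · exact ⟨p₀, hp₀⟩
        have hindeg : indeg A w = 1 := by
          have : {u | A u w} = {p₀} := by
            apply Set.eq_singleton_iff_unique_mem.mpr
            exact ⟨hp₀, fun e he => hdeg e p₀ he hp₀⟩
          rw [indeg, this, Set.ncard_singleton]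
        exact ⟨w, hwX, hwS, hindeg, houtdeg⟩

end Main

section Cyc
variable {V : Type*} {q : ℕ} {c : ZMod q → V}

lemma cyc_walk {A : V → V → Prop} (hc : ∀ i : ZMod q, A (c i) (c (i + 1))) :
    ∀ (k : ℕ) (m : ZMod q),
      Relation.ReflTransGen
        (fun a b => A a b ∧ ∃ j : ZMod q, a = c j ∧ b = c (j + 1))
        (c m) (c (m + (k : ZMod q))) := by
  intro k
  induction k with
  | zero => intro m; simpa using Relation.ReflTransGen.refl
  | succ k ih =>
    intro m
    have h1 : (((k : ℕ) + 1 : ℕ) : ZMod q) = (k : ZMod q) + 1 := by push_cast; ring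
    have hih := ih m
    have harc : A (c (m + (k : ZMod q))) (c (m + (k : ZMod q) + 1)) := hc _
    have hres := hih.tail ⟨harc, ⟨m + (k : ZMod q), rfl, rfl⟩⟩
    rw [show m + (((k : ℕ) + 1 : ℕ) : ZMod q) = m + (k : ZMod q) + 1 by rw [h1]; ring]
    exact hres

lemma cyc_reach (hq : 2 ≤ q) {A : V → V → Prop} (hc : ∀ i : ZMod q, A (c i) (c (i + 1)))
    (m i : ZMod q) :
    Relation.ReflTransGen
      (fun a b => A a b ∧ ∃ j : ZMod q, a = c j ∧ b = c (j + 1))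
      (c m) (c i) := by
  haveI : NeZero q := ⟨by omega⟩
  have := cyc_walk hc (i - m).val m
  rwa [ZMod.natCast_val, ZMod.cast_id, add_sub_cancel] at this

end Cyc



/-- A strong component `S` of `D'` containing `λ > 1` vertices of `C_q`
contains at least `λ` vertices that are linear in `D`. -/
theorem stmt11 {V : Type*} [Fintype V] (A : V → V → Prop) (q : ℕ) (c : ZMod q → V)
    (hMSD : IsMSD A) (hc : IsCycleIn A q c) (S : Set V) (hS : IsSC (DelCycle A q c) S)
    (hl : 1 < (S ∩ Set.range c).ncard) :
    (S ∩ Set.range c).ncard ≤ {v ∈ S | IsLinear A v}.ncard := by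
  obtain ⟨v₀, hv₀⟩ := hS
  have hSreach : ∀ x y, x ∈ S → y ∈ S → Relation.ReflTransGen (DelCycle A q c) x y := by
    intro x y hx hy
    rw [hv₀] at hx hy
    exact hx.2.trans hy.1
  have hSmid : ∀ a b x, a ∈ S → b ∈ S → Relation.ReflTransGen (DelCycle A q c) a x →
      Relation.ReflTransGen (DelCycle A q c) x b → x ∈ S := by
    intro a b x ha hb hax hxb
    rw [hv₀] at ha hb ⊢
    exact ⟨ha.1.trans hax, hxb.trans hb.2⟩
  have hq2 : 2 ≤ q := hc.1
  have hc3 := hc.2.2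
  -- second marked vertex
  obtain ⟨a₀, b₀, ha₀, hb₀, hab₀⟩ := (Set.one_lt_ncard_iff (Set.toFinite _)).mp hl
  -- the pack : for each marked vertex u, an arc (s,u) and a linear vertex in its region
  have pack : ∀ u, u ∈ S ∩ Set.range c →
      ∃ s ℓ : V, A s u ∧ s ∈ Region A s u ∧ (Region A s u ∩ Set.range c = ∅) ∧
        ℓ ∈ Region A s u ∧ ℓ ∈ S ∧ IsLinear A ℓ := by
    rintro u ⟨huS, hurc⟩
    -- a marked vertex different from u
    obtain ⟨u', hu'S, hu'u⟩ : ∃ u', u' ∈ S ∧ u' ≠ u := by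
      by_cases h : a₀ = u
      · exact ⟨b₀, hb₀.1, fun hh => hab₀ (by rw [h, hh])⟩
      · exact ⟨a₀, ha₀.1, h⟩
    have hπ : Relation.ReflTransGen (DelCycle A q c) u' u := hSreach u' u hu'S huS
    rcases Relation.ReflTransGen.cases_tail hπ with h | ⟨s, hu's, hsu⟩
    · exact absurd h.symm hu'u
    · have hsS : s ∈ S := hSmid u' u s hu'S huS hu's (Relation.ReflTransGen.single hsu)
      have harc : A s u := hsu.1
      have hncyc : ¬ ∃ i : ZMod q, s = c i ∧ u = c (i + 1) := hsu.2
      have hsX : s ∈ Region A s u := tail_mem_region hMSD harc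
      have hRc : Region A s u ∩ Set.range c = ∅ := by
        rw [Set.eq_empty_iff_forall_notMem]
        rintro x ⟨hxR, ⟨m, hm⟩⟩
        obtain ⟨i, hi⟩ := hurc
        have hreach : Relation.ReflTransGen (Del A s u) (c m) (c i) := by
          refine Relation.ReflTransGen.mono ?_ _ _ (cyc_reach hq2 hc3 m i)
          rintro p r ⟨hpr, j, hj1, hj2⟩
          exact ⟨hpr, fun hh => hncyc ⟨j, hh.1 ▸ hj1, hh.2 ▸ hj2⟩⟩
        exact hxR (hm ▸ (hi ▸ hreach))
      obtain ⟨ℓ, hℓ1, hℓ2, hℓ3⟩ :=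
        region_linear A hMSD q c S hSreach hSmid (Region A s u).ncard u s
          harc huS hsS hRc le_rfl
      exact ⟨s, ℓ, harc, hsX, hRc, hℓ1, hℓ2, hℓ3⟩
  choose sF ℓF hA hsR hRc hℓR hℓS hℓlin using pack
  -- disjointness of the regions
  have hdisj : ∀ u₁ u₂ (h₁ : u₁ ∈ S ∩ Set.range c) (h₂ : u₂ ∈ S ∩ Set.range c),
      u₁ ≠ u₂ → ∀ x, x ∈ Region A (sF u₁ h₁) u₁ → x ∉ Region A (sF u₂ h₂) u₂ := by
    intro u₁ u₂ h₁ h₂ hne x hx hx2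
    obtain ⟨i₁, hi₁⟩ := h₁.2
    obtain ⟨i₂, hi₂⟩ := h₂.2
    have hs₂c : sF u₂ h₂ ∉ Set.range c := by
      intro hmem
      exact absurd (Set.mem_inter (hsR u₂ h₂) hmem)
        (by rw [hRc u₂ h₂]; exact fun h => h)
    -- part 1 : drain from x to sF u₁ inside region 1
    have part1 : Relation.ReflTransGen (Del A (sF u₂ h₂) u₂) x (sF u₁ h₁) := by
      refine Relation.ReflTransGen.mono ?_ _ _ (drain hMSD.1 hx)
      rintro p r ⟨hpr, -, hrR⟩
      refine ⟨hpr, fun hh => ?_⟩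
      have : r ∉ Set.range c := by
        intro hmem
        exact absurd (Set.mem_inter hrR hmem)
          (by rw [hRc u₁ h₁]; exact fun h => h)
      exact this (hh.2 ▸ h₂.2)
    -- part 2 : the arc (sF u₁, u₁)
    have part2 : Relation.ReflTransGen (Del A (sF u₂ h₂) u₂) x u₁ :=
      part1.tail ⟨hA u₁ h₁, fun hh => hne (by rw [hh.2])⟩
    -- part 3 : along the cycle from u₁ to u₂
    have part3 : Relation.ReflTransGen (Del A (sF u₂ h₂) u₂) u₁ u₂ := by
      have hmono : ∀ p r : V, (A p r ∧ ∃ j : ZMod q, p = c j ∧ r = c (j + 1)) →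
          Del A (sF u₂ h₂) u₂ p r := by
        rintro p r ⟨hpr, j, hj1, hj2⟩
        exact ⟨hpr, fun hh => hs₂c ⟨j, hj1.symm.trans hh.1⟩⟩
      have hres := Relation.ReflTransGen.mono hmono _ _ (cyc_reach hq2 hc3 i₁ i₂)
      rw [hi₁, hi₂] at hres
      exact hres
    exact hx2 (part2.trans part3)
  -- the injection
  classical
  set f : V → V := fun u => if h : u ∈ S ∩ Set.range c then ℓF u h else u with hfdef
  refine Set.ncard_le_ncard_of_injOn f ?_ ?_ (Set.toFinite _)
  · intro u hu
    rw [hfdef]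
    simp only [dif_pos hu]
    exact ⟨hℓS u hu, hℓlin u hu⟩
  · intro u₁ h₁ u₂ h₂ heq
    by_contra hne
    rw [hfdef] at heq
    simp only [dif_pos h₁, dif_pos h₂] at heq
    exact hdisj u₁ u₂ h₁ h₂ hne (ℓF u₁ h₁) (hℓR u₁ h₁) (heq ▸ hℓR u₂ h₂)
end
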